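/- arXiv:2409.01678 — 6 statements merged into one kernel-verified Lean document; each statement's English description precedes it below -/
import Mathlib

section
/- For every triple of vertices a, b, c in a finite tree T there exists a unique vertex M of T that lies on all three of the (unique) paths connecting a and b, a and c, and b and c in T. -/
open SimpleGraph

private lemma walk_exists_first {V : Type*} {G : SimpleGraph V} [DecidableEq V]
    (S : V → Prop) [DecidablePred S] :
    ∀ {x y : V} (w : G.Walk x y), S y →
      ∃ u, ∃ hu : u ∈ w.support, S u ∧
        ∀ v ∈ (w.takeUntil u hu).support, S v → v = u := by
  intro x y w
  induction w with
  | nil =>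
    intro hy
    refine ⟨_, SimpleGraph.Walk.start_mem_support _, hy, ?_⟩
    intro v hv _
    have := SimpleGraph.Walk.support_takeUntil_subset _
        (SimpleGraph.Walk.start_mem_support (SimpleGraph.Walk.nil : G.Walk _ _)) hv
    simpa using this
  | @cons x x' y h p ih =>
    intro hy
    by_cases hSx : S x
    · refine ⟨x, SimpleGraph.Walk.start_mem_support _, hSx, ?_⟩
      intro v hv _
      have : (SimpleGraph.Walk.cons h p).takeUntil x
          (SimpleGraph.Walk.start_mem_support _) = SimpleGraph.Walk.nil := by
        simp [SimpleGraph.Walk.takeUntil]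
      rw [this] at hv
      simpa using hv
    · obtain ⟨u, hu, hSu, hfirst⟩ := ih hy
      have hxu : x ≠ u := fun hxu => hSx (hxu ▸ hSu)
      have hu' : u ∈ (SimpleGraph.Walk.cons h p).support := by
        simp [SimpleGraph.Walk.support_cons]; right; exact hu
      refine ⟨u, hu', hSu, ?_⟩
      intro v hv hSv
      have hts : (SimpleGraph.Walk.cons h p).takeUntil u hu' =
          SimpleGraph.Walk.cons h (p.takeUntil u hu) := by
        simp [SimpleGraph.Walk.takeUntil, hxu]
      rw [hts, SimpleGraph.Walk.support_cons] at hv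
      rcases List.mem_cons.mp hv with rfl | hv
      · exact absurd hSv hSx
      · exact hfirst v hv hSv

/-- **Median of three vertices in a tree.** For every triple of vertices `a, b, c` in a finite
tree `T` there is a unique vertex `M` lying on all three paths connecting `a, b`, `a, c`
and `b, c`. -/
theorem tree_exists_unique_median {V : Type*} [Fintype V] (T : SimpleGraph V)
    (hT : T.IsTree) (a b c : V) :
    ∃! M : V,
      (∀ p : T.Path a b, M ∈ p.1.support) ∧
      (∀ q : T.Path a c, M ∈ q.1.support) ∧
      (∀ r : T.Path b c, M ∈ r.1.support) := by
  classical
  obtain ⟨p0, hp0, hp0u⟩ := hT.existsUnique_path a b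
  obtain ⟨q0, hq0, hq0u⟩ := hT.existsUnique_path a c
  set w : T.Walk b a := p0.reverse with hwdef
  have hwpath : w.IsPath := hp0.reverse
  obtain ⟨u, hu, hSu, hfirst⟩ :=
    walk_exists_first (fun v => v ∈ q0.support) w (q0.start_mem_support)
  set t : T.Walk b u := w.takeUntil u hu with htdef
  set d : T.Walk u c := q0.dropUntil u hSu with hddef
  have htp : t.IsPath := hwpath.takeUntil hu
  have hdp : d.IsPath := hq0.dropUntil hSu
  -- the appended walk b → u → c is a path
  have hdisj : ∀ v ∈ t.support, v ∈ d.support.tail → False := by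
    intro v hvt hvd
    have hvd' : v ∈ d.support := List.mem_of_mem_tail hvd
    have hvq : v ∈ q0.support := q0.support_dropUntil_subset hSu hvd'
    have hveq : v = u := hfirst v hvt hvq
    have hcons := d.support_eq_cons
    have : u ∉ d.support.tail := by
      have := hdp.support_nodup
      rw [hcons] at this
      exact (List.nodup_cons.mp this).1
    exact this (hveq ▸ hvd)
  have hR : (t.append d).IsPath := by
    rw [SimpleGraph.Walk.isPath_def, SimpleGraph.Walk.support_append]
    refine List.Nodup.append htp.support_nodup ?_ ?_
    · exact hdp.support_nodup.tail
    · intro v hvt hvd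
      exact hdisj v hvt hvd
  have hMq : u ∈ q0.support := hSu
  have hMp : u ∈ p0.support := by
    have : u ∈ w.support := hu
    rwa [hwdef, SimpleGraph.Walk.support_reverse, List.mem_reverse] at this
  have hMr : u ∈ (t.append d).support := by
    rw [SimpleGraph.Walk.mem_support_append_iff]
    left
    exact t.end_mem_support
  refine ⟨u, ⟨?_, ?_, ?_⟩, ?_⟩
  · intro p
    rwa [hp0u p.1 p.2]
  · intro q
    rwa [hq0u q.1 q.2]
  · intro r
    obtain ⟨r0, hr0, hr0u⟩ := hT.existsUnique_path b c
    rw [hr0u r.1 r.2, ← hr0u (t.append d) hR]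
    exact hMr
  · -- uniqueness
    rintro M' ⟨hP, hQ, hR'⟩
    have hM'p : M' ∈ p0.support := hP ⟨p0, hp0⟩
    have hM'q : M' ∈ q0.support := hQ ⟨q0, hq0⟩
    have hM'r : M' ∈ (t.append d).support := hR' ⟨t.append d, hR⟩
    rcases (SimpleGraph.Walk.mem_support_append_iff _ _).mp hM'r with hMt | hMd
    · exact hfirst M' hMt hM'q
    · by_contra hne
      -- M' is in the segment u → c of q0, and also on p0
      have hMdtail : M' ∈ d.support.tail := by
        have hcons := d.support_eq_cons
        rw [hcons] at hMd
        rcases List.mem_cons.mp hMd with h | h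
        · exact absurd h hne
        · exact h
      -- M' ∈ w.support
      have hM'w : M' ∈ w.support := by
        rw [hwdef, SimpleGraph.Walk.support_reverse, List.mem_reverse]
        exact hM'p
      -- split w at u
      have hsplit := w.take_spec hu
      have hM'tw : M' ∈ t.support ∨ M' ∈ (w.dropUntil u hu).support := by
        rw [← SimpleGraph.Walk.mem_support_append_iff _ _, htdef, hsplit]
        exact hM'w
      have hM'seg : M' ∈ (w.dropUntil u hu).support := by
        rcases hM'tw with h | h
        · exact absurd (hfirst M' h hM'q) hne
        · exact h
      -- the segment u → a of w reversed equals q0.takeUntil u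
      set seg : T.Walk u a := w.dropUntil u hu with hsegdef
      have hsegp : seg.IsPath := hwpath.dropUntil hu
      have hsegrev : seg.reverse.IsPath := hsegp.reverse
      have htup : (q0.takeUntil u hSu).IsPath := hq0.takeUntil hSu
      obtain ⟨z0, hz0, hz0u⟩ := hT.existsUnique_path a u
      have heq : seg.reverse = q0.takeUntil u hSu := by
        rw [hz0u seg.reverse hsegrev, hz0u (q0.takeUntil u hSu) htup]
      have hM'tu : M' ∈ (q0.takeUntil u hSu).support := by
        rw [← heq, SimpleGraph.Walk.support_reverse, List.mem_reverse]
        exact hM'seg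
      -- but q0 is a path, so takeUntil and dropUntil supports only meet at u
      have hnodup := hq0.support_nodup
      have hq0split := q0.take_spec hSu
      rw [← hq0split, SimpleGraph.Walk.support_append] at hnodup
      have hdisj2 := (List.nodup_append'.mp hnodup).2.2
      exact hdisj2 hM'tu hMdtail
end

section
/- In the uniformly stacked triangulation S_d, each of the three outer vertices o_1, o_2, o_3 is adjacent to exactly 2^d − 1 interior vertices. -/
open SimpleGraph

/-- The bounded triangular faces of the uniformly stacked triangulation `S_d`. -/
def SFaces : ℕ → Type
  | 0 => PUnit
  | d + 1 => SFaces d × Fin 3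

/-- The vertices of the uniformly stacked triangulation `S_d`: going from `S_d` to `S_{d+1}`,
one new vertex is stacked into each bounded face of `S_d`. -/
def SVerts : ℕ → Type
  | 0 => Fin 3
  | d + 1 => SVerts d ⊕ SFaces d

/-- The three corner vertices of each bounded face of `S_d`.  A face `(f, j)` of `S_{d+1}` is
one of the three faces obtained by stacking the new vertex `Sum.inr f` into the face `f`. -/
def corners : (d : ℕ) → SFaces d → Fin 3 → SVerts d
  | 0, _, i => i
  | d + 1, fj, i =>
      if i = 0 then Sum.inr fj.1
      else if i = 1 then Sum.inl (corners d fj.1 fj.2)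
      else Sum.inl (corners d fj.1 (fj.2 + 1))

/-- The uniformly stacked triangulation `S_d` as a simple graph: two vertices are adjacent
iff they are distinct corners of a common bounded face. -/
def stacked (d : ℕ) : SimpleGraph (SVerts d) :=
  SimpleGraph.fromRel (fun a b =>
    ∃ (f : SFaces d) (i j : Fin 3), i ≠ j ∧ a = corners d f i ∧ b = corners d f j)

/-- The three outer vertices `o₁, o₂, o₃` of `S_d`. -/
def outerVert : (d : ℕ) → Fin 3 → SVerts d
  | 0, i => i
  | d + 1, i => Sum.inl (outerVert d i)

/-- The center vertex of `S_{d+1}`: the unique vertex belonging to `S_1` but not to `S_0`. -/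
def centerVert : (d : ℕ) → SVerts (d + 1)
  | 0 => Sum.inr PUnit.unit
  | d + 1 => Sum.inl (centerVert d)

instance instFintypeSFaces : ∀ d, Fintype (SFaces d)
  | 0 => inferInstanceAs (Fintype PUnit)
  | d + 1 => letI := instFintypeSFaces d; inferInstanceAs (Fintype (SFaces d × Fin 3))

instance instFintypeSVerts : ∀ d, Fintype (SVerts d)
  | 0 => inferInstanceAs (Fintype (Fin 3))
  | d + 1 => letI := instFintypeSVerts d; letI := instFintypeSFaces d
             inferInstanceAs (Fintype (SVerts d ⊕ SFaces d))

@[simp] lemma SV_inl_inl {d : ℕ} {a b : SVerts d} :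
    @Eq (SVerts (d+1)) (Sum.inl a) (Sum.inl b) ↔ a = b :=
  ⟨fun h => Sum.inl_injective h, fun h => by rw [h]⟩

@[simp] lemma SV_inr_inr {d : ℕ} {a b : SFaces d} :
    @Eq (SVerts (d+1)) (Sum.inr a) (Sum.inr b) ↔ a = b :=
  ⟨fun h => Sum.inr_injective h, fun h => by rw [h]⟩

@[simp] lemma SV_inl_ne_inr {d : ℕ} {a : SVerts d} {b : SFaces d} :
    ¬ @Eq (SVerts (d+1)) (Sum.inl a) (Sum.inr b) :=
  fun h => Sum.inl_ne_inr h

@[simp] lemma SV_inr_ne_inl {d : ℕ} {a : SFaces d} {b : SVerts d} :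
    ¬ @Eq (SVerts (d+1)) (Sum.inr a) (Sum.inl b) :=
  fun h => Sum.inr_ne_inl h

lemma fin3_ne_add_one : ∀ j : Fin 3, j ≠ j + 1 := by decide

lemma corners_inj : ∀ (d : ℕ) (f : SFaces d) {a b : Fin 3},
    corners d f a = corners d f b → a = b
  | 0, _, _, _, h => h
  | d + 1, fj, a, b, h => by
      obtain ⟨f, j⟩ := fj
      fin_cases j <;> fin_cases a <;> fin_cases b <;>
        simp [corners] at h ⊢ <;>
        exact absurd (corners_inj d f h) (by decide)

lemma stacked_adj_iff {d : ℕ} {a b : SVerts d} :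
    (stacked d).Adj a b ↔
      ∃ f i j, i ≠ j ∧ a = corners d f i ∧ b = corners d f j := by
  simp only [stacked, fromRel_adj]
  constructor
  · rintro ⟨hne, h | ⟨f, p, q, hpq, h1, h2⟩⟩
    · exact h
    · exact ⟨f, q, p, hpq.symm, h2, h1⟩
  · rintro ⟨f, p, q, hpq, rfl, rfl⟩
    exact ⟨fun h => hpq (corners_inj d f h), Or.inl ⟨f, p, q, hpq, rfl, rfl⟩⟩

lemma fin3_cases {p q : Fin 3} (h : p ≠ q) : q = p + 1 ∨ p = q + 1 := by
  revert h; revert p q; decide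

lemma adj_inl_inl {d : ℕ} {a b : SVerts d} :
    (stacked (d+1)).Adj (Sum.inl a) (Sum.inl b) ↔ (stacked d).Adj a b := by
  refine stacked_adj_iff.trans ?_; rw [stacked_adj_iff]
  constructor
  · rintro ⟨⟨f, j⟩, p, q, hpq, ha, hb⟩
    fin_cases p <;> fin_cases q <;> simp [corners] at ha hb hpq
    · exact ⟨f, j, j + 1, fin3_ne_add_one j, ha, hb⟩
    · exact ⟨f, j + 1, j, (fin3_ne_add_one j).symm, ha, hb⟩
  · rintro ⟨f, p, q, hpq, rfl, rfl⟩
    rcases fin3_cases hpq with h | h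
    · subst h
      exact ⟨(f, p), 1, 2, by decide, by simp [corners], by simp [corners]⟩
    · subst h
      exact ⟨(f, q), 2, 1, by decide, by simp [corners], by simp [corners]⟩

lemma adj_inl_inr {d : ℕ} {a : SVerts d} {f : SFaces d} :
    (stacked (d+1)).Adj (Sum.inl a) (Sum.inr f) ↔ ∃ p, corners d f p = a := by
  refine stacked_adj_iff.trans ?_
  constructor
  · rintro ⟨⟨g, j⟩, p, q, hpq, ha, hb⟩
    fin_cases p <;> fin_cases q <;> simp [corners] at ha hb hpq
    · subst hb; exact ⟨j, ha.symm⟩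
    · subst hb; exact ⟨j + 1, ha.symm⟩

  · rintro ⟨p, rfl⟩
    exact ⟨(f, p), 1, 0, by decide, by simp [corners], by simp [corners]⟩

lemma mem_range_inl {d : ℕ} {w : SVerts d} :
    Sum.inl w ∈ Set.range (outerVert (d+1)) ↔ w ∈ Set.range (outerVert d) := by
  constructor
  · rintro ⟨k, hk⟩
    exact ⟨k, Sum.inl_injective hk⟩
  · rintro ⟨k, rfl⟩
    exact ⟨k, rfl⟩

lemma inr_not_range {d : ℕ} {f : SFaces d} :
    Sum.inr f ∉ Set.range (outerVert (d+1)) := by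
  rintro ⟨k, hk⟩
  simp [outerVert] at hk

def SF (d : ℕ) (i : Fin 3) : Set (SFaces d) :=
  {f | ∃ p, corners d f p = outerVert d i}

lemma fin3_sub_one_ne : ∀ p : Fin 3, p - 1 ≠ p := by decide
lemma fin3_sub_add : ∀ p : Fin 3, p - 1 + 1 = p := by decide

lemma SF_card : ∀ (d : ℕ) (i : Fin 3), (SF d i).ncard = 2 ^ d := by
  intro d
  induction d with
  | zero =>
      intro i
      have : SF 0 i = Set.univ := by
        ext f
        simp only [SF, Set.mem_setOf_eq, Set.mem_univ, iff_true]
        exact ⟨i, rfl⟩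
      rw [this, Set.ncard_univ]
      simp [Nat.card_eq_fintype_card, SFaces]
  | succ d ih =>
      intro i
      set O := outerVert d i with hO
      set A1 : Set (SFaces (d+1)) := {fj | corners d fj.1 fj.2 = O} with hA1
      set A2 : Set (SFaces (d+1)) :=
        {fj | corners d fj.1 (fj.2 + 1) = O ∧ corners d fj.1 fj.2 ≠ O} with hA2
      have hunion : SF (d+1) i = A1 ∪ A2 := by
        ext ⟨f, j⟩
        simp only [SF, Set.mem_setOf_eq, Set.mem_union, hA1, hA2]
        constructor
        · rintro ⟨p, hp⟩
          fin_cases p <;> simp [corners, outerVert] at hp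
          · left; exact hp
          · by_cases h : corners d f j = O
            · left; exact h
            · right; exact ⟨hp, h⟩
        · rintro (h | ⟨h, _⟩)
          · exact ⟨1, by simp [corners, outerVert]; exact h⟩
          · exact ⟨2, by simp [corners, outerVert, h]; exact hO⟩
      have himg1 : Prod.fst '' A1 = SF d i := by
        ext f
        constructor
        · rintro ⟨⟨g, j⟩, hg, rfl⟩; exact ⟨j, hg⟩
        · rintro ⟨p, hp⟩; exact ⟨(f, p), hp, rfl⟩
      have himg2 : Prod.fst '' A2 = SF d i := by
        ext f
        constructor
        · rintro ⟨⟨g, j⟩, hg, rfl⟩; exact ⟨j + 1, hg.1⟩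
        · rintro ⟨p, hp⟩
          refine ⟨(f, p - 1), ⟨by rw [fin3_sub_add]; exact hp, fun h => ?_⟩, rfl⟩
          exact fin3_sub_one_ne p (corners_inj d f (h.trans hp.symm))
      have hinj1 : Set.InjOn Prod.fst A1 := by
        rintro ⟨f1, j1⟩ h1 ⟨f2, j2⟩ h2 heq
        simp only at heq
        subst heq
        have h3 : j1 = j2 := corners_inj d f1 (h1.trans h2.symm)
        simp [h3]
      have hinj2 : Set.InjOn Prod.fst A2 := by
        rintro ⟨f1, j1⟩ h1 ⟨f2, j2⟩ h2 heq
        simp only at heq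
        subst heq
        have h4 : j1 + 1 = j2 + 1 := corners_inj d f1 (h1.1.trans h2.1.symm)
        have h3 : j1 = j2 := add_right_cancel h4
        simp [h3]
      have hdisj : Disjoint A1 A2 := by
        rw [Set.disjoint_left]
        rintro ⟨f, j⟩ h1 h2
        exact h2.2 h1
      have hc1 : A1.ncard = 2 ^ d := by
        rw [← ih i, ← himg1, Set.ncard_image_of_injOn hinj1]; rfl
      have hc2 : A2.ncard = 2 ^ d := by
        rw [← ih i, ← himg2, Set.ncard_image_of_injOn hinj2]; rfl
      rw [hunion, Set.ncard_union_eq hdisj (Set.toFinite _) (Set.toFinite _), hc1, hc2]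
      ring

/-- In `S_d`, each of the three outer vertices is adjacent to exactly `2 ^ d − 1`
interior vertices (vertices other than the three outer vertices). -/
theorem stacked_outer_degree_interior (d : ℕ) (i : Fin 3) :
    {v : SVerts d | (stacked d).Adj (outerVert d i) v ∧
        v ∉ Set.range (outerVert d)}.ncard = 2 ^ d - 1 := by
  induction d with
  | zero =>
      have he : {v : SVerts 0 | (stacked 0).Adj (outerVert 0 i) v ∧
          v ∉ Set.range (outerVert 0)} = ∅ := by
        ext v
        simp only [Set.mem_setOf_eq, Set.mem_empty_iff_false, iff_false, not_and, not_not]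
        intro _
        exact ⟨v, rfl⟩
      rw [he]
      simp
  | succ d ih =>
      have hset : {v : SVerts (d+1) | (stacked (d+1)).Adj (outerVert (d+1) i) v ∧
          v ∉ Set.range (outerVert (d+1))} =
          Sum.inl '' {w : SVerts d | (stacked d).Adj (outerVert d i) w ∧
            w ∉ Set.range (outerVert d)} ∪ Sum.inr '' SF d i := by
        ext v
        cases v with
        | inl w =>
            show (_ ∧ _) ↔ ((∃ x, _ ∧ _) ∨ (∃ x, _ ∧ _))
            constructor
            · rintro ⟨hadj, hr⟩
              left
              exact ⟨w, ⟨adj_inl_inl.mp hadj, fun hw => hr (mem_range_inl.mpr hw)⟩, rfl⟩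
            · rintro (⟨w', ⟨hadj, hr⟩, hw⟩ | ⟨f, _, hf⟩)
              · obtain rfl : w' = w := Sum.inl_injective hw
                exact ⟨adj_inl_inl.mpr hadj, fun h => hr (mem_range_inl.mp h)⟩
              · exact absurd hf (by simp)
        | inr f =>
            show (_ ∧ _) ↔ ((∃ x, _ ∧ _) ∨ (∃ x, _ ∧ _))
            constructor
            · rintro ⟨hadj, _⟩
              right
              exact ⟨f, adj_inl_inr.mp hadj, rfl⟩
            · rintro (⟨w', _, hw⟩ | ⟨g, hg, hf⟩)
              · exact absurd hw (by simp)
              · obtain rfl : g = f := Sum.inr_injective hf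
                exact ⟨adj_inl_inr.mpr hg, inr_not_range⟩
      have hdisj : Disjoint
          (Sum.inl '' {w : SVerts d | (stacked d).Adj (outerVert d i) w ∧
            w ∉ Set.range (outerVert d)}) (Sum.inr '' SF d i) := by
        rw [Set.disjoint_left]
        rintro x ⟨w, _, rfl⟩ ⟨f, _, hf⟩
        simp at hf
      erw [hset, Set.ncard_union_eq hdisj (Set.toFinite _) (Set.toFinite _),
        Set.ncard_image_of_injective _ Sum.inl_injective,
        Set.ncard_image_of_injective _ Sum.inr_injective, ih, SF_card]
      have h1 : 1 ≤ 2 ^ d := Nat.one_le_two_pow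
      rw [pow_succ]
      omega
end

section
/- Let a_1, a_2 satisfy a_1(d) = 4·a_1(d−1) + a_2(d−1) + 1 + Σ_{j=0}^{d−2} a_1(j) and a_2(d) = 6·a_1(d−1) + 3·a_2(d−1) + 2 + a_1(d−2) + 2·Σ_{j=0}^{d−3} a_1(j), with suitable nonnegative initial values. Then a_1(d) = O((3+√10)^d). -/
open Finset

/-- The system of recurrences
`a₁(d) = 4a₁(d−1) + a₂(d−1) + 1 + Σ_{j=0}^{d−2} a₁(j)` (for `d ≥ 1`) and
`a₂(d) = 6a₁(d−1) + 3a₂(d−1) + 2 + a₁(d−2) + 2·Σ_{j=0}^{d−3} a₁(j)` (for `d ≥ 2`),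
with arbitrary (nonnegative) initial values, satisfies `a₁(d) = O((3 + √10)^d)`. -/
theorem recurrence_three_plus_sqrt_ten_growth (a₁ a₂ : ℕ → ℕ)
    (h₁ : ∀ d, a₁ (d + 1) = 4 * a₁ d + a₂ d + 1 + ∑ j ∈ Finset.range d, a₁ j)
    (h₂ : ∀ d, a₂ (d + 2) =
      6 * a₁ (d + 1) + 3 * a₂ (d + 1) + 2 + a₁ d + 2 * ∑ j ∈ Finset.range d, a₁ j) :
    ∃ C : ℝ, 0 < C ∧ ∀ d, (a₁ d : ℝ) ≤ C * (3 + Real.sqrt 10) ^ d := by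
  set s := Real.sqrt 10 with hsdef
  have hs2 : s ^ 2 = 10 := Real.sq_sqrt (by norm_num)
  have hs0 : 0 ≤ s := Real.sqrt_nonneg 10
  have hs3 : 3 ≤ s := by nlinarith
  have hs4 : s ≤ 4 := by nlinarith
  -- the third-order recurrence in ℕ
  have keyN : ∀ d, a₁ (d+3) + 5 * a₁ (d+1) + a₁ d = 7 * a₁ (d+2) := by
    intro d
    have e1 := h₁ (d+2)
    have e2 := h₁ (d+1)
    have e3 := h₂ d
    rw [Finset.sum_range_succ, Finset.sum_range_succ] at e1
    rw [Finset.sum_range_succ] at e2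
    have e1' : a₁ (d+3) = 4 * a₁ (d+2) + a₂ (d+2) + 1
        + ((∑ j ∈ Finset.range d, a₁ j) + a₁ d + a₁ (d+1)) := e1
    have e2' : a₁ (d+2) = 4 * a₁ (d+1) + a₂ (d+1) + 1
        + ((∑ j ∈ Finset.range d, a₁ j) + a₁ d) := e2
    omega
  set B : ℕ → ℝ := fun d => (a₁ d : ℝ) with hB
  have hBnn : ∀ d, 0 ≤ B d := fun d => Nat.cast_nonneg _
  have keyR : ∀ d, B (d+3) = 7 * B (d+2) - 5 * B (d+1) - B d := by
    intro d
    have := keyN d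
    have : (a₁ (d+3) : ℝ) + 5 * a₁ (d+1) + a₁ d = 7 * a₁ (d+2) := by
      exact_mod_cast congrArg (fun n : ℕ => (n : ℝ)) this
    simp only [hB]
    linarith
  set x : ℕ → ℝ := fun d => B (d+1) - (3 + s) * B d with hx
  have xrec : ∀ d, x (d+2) = (4 - s) * x (d+1) + (s - 3) * x d := by
    intro d
    simp only [hx]
    have hk := keyR d
    have h3 : (d+1)+2 = d+3 := by ring
    have h2 : (d+1)+1 = d+2 := by ring
    rw [h3, h2]
    linear_combination hk + (B d - B (d+1)) * hs2
  set M : ℝ := max |x 0| |x 1| with hM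
  have hM0 : 0 ≤ M := le_trans (abs_nonneg _) (le_max_left _ _)
  have xb : ∀ d, |x d| ≤ M ∧ |x (d+1)| ≤ M := by
    intro d
    induction d with
    | zero => exact ⟨le_max_left _ _, le_max_right _ _⟩
    | succ n ih =>
      refine ⟨ih.2, ?_⟩
      rw [xrec n]
      calc |(4 - s) * x (n+1) + (s - 3) * x n|
          ≤ |(4 - s) * x (n+1)| + |(s - 3) * x n| := abs_add_le _ _
        _ = (4 - s) * |x (n+1)| + (s - 3) * |x n| := by
            have hA : |4 - s| = 4 - s := abs_of_nonneg (by linarith)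
            have hBb : |s - 3| = s - 3 := abs_of_nonneg (by linarith)
            rw [abs_mul, abs_mul, hA, hBb]
        _ ≤ (4 - s) * M + (s - 3) * M := by
            gcongr
            · linarith
            · exact ih.1
        _ = M := by ring
  have step : ∀ d, B (d+1) ≤ (3 + s) * B d + M := by
    intro d
    have h1 : x d ≤ |x d| := le_abs_self _
    have h2 := (xb d).1
    simp only [hx] at h1
    linarith
  set C0 : ℝ := B 0 + M / (s + 2) with hC0
  have hs2pos : (0:ℝ) < s + 2 := by linarith
  have main : ∀ d, B d ≤ C0 * (3 + s) ^ d - M / (s + 2) := by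
    intro d
    induction d with
    | zero => simp [hC0]
    | succ n ih =>
      have := step n
      have hpow : (0:ℝ) ≤ (3 + s) ^ n := by positivity
      calc B (n+1) ≤ (3 + s) * B n + M := step n
        _ ≤ (3 + s) * (C0 * (3 + s) ^ n - M / (s + 2)) + M := by
            have h35 : (0:ℝ) ≤ 3 + s := by linarith
            nlinarith
        _ = C0 * (3 + s) ^ (n+1) - M / (s + 2) := by
            field_simp
            ring
  have hMdiv : 0 ≤ M / (s + 2) := by positivity
  have hC0nn : 0 ≤ C0 := by have := hBnn 0; rw [hC0]; linarith
  clear_value C0 M x B s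
  refine ⟨C0 + 1, by linarith, fun d => ?_⟩
  have hpow : (0:ℝ) ≤ (3 + s) ^ d := by positivity
  have hmd := main d
  have hBd : (a₁ d : ℝ) = B d := by rw [hB]
  have hexp : (C0 + 1) * (3 + s) ^ d = C0 * (3 + s) ^ d + (3 + s) ^ d := by ring
  rw [hBd]
  nlinarith [hmd, hpow, hMdiv, hexp, mul_nonneg hC0nn hpow]
end

section
/- If k ≥ 5 and n ≥ 6k² with k dividing n, then there is no planar graph on n vertices that simultaneously contains the star C_{n,1}, the double star C_{n,2}, and the k-caterpillar C_{n,k} as subgraphs. -/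
open SimpleGraph

def HasMinor {V W : Type*} (G : SimpleGraph V) (H : SimpleGraph W) : Prop :=
  ∃ f : W → Set V,
    (∀ w, (f w).Nonempty) ∧
    (∀ w, (G.induce (f w)).Connected) ∧
    (Pairwise fun w₁ w₂ => Disjoint (f w₁) (f w₂)) ∧
    ∀ ⦃w₁ w₂⦄, H.Adj w₁ w₂ → ∃ a ∈ f w₁, ∃ b ∈ f w₂, G.Adj a b

def IsPlanar {V : Type*} (G : SimpleGraph V) : Prop :=
  ¬ HasMinor G (completeGraph (Fin 5)) ∧
  ¬ HasMinor G (completeBipartiteGraph (Fin 3) (Fin 3))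

def IsOuterplanar {V : Type*} (G : SimpleGraph V) : Prop :=
  ¬ HasMinor G (completeGraph (Fin 4)) ∧
  ¬ HasMinor G (completeBipartiteGraph (Fin 2) (Fin 3))

def Contains {V W : Type*} (G : SimpleGraph V) (H : SimpleGraph W) : Prop :=
  ∃ f : W ↪ V, ∀ ⦃a b⦄, H.Adj a b → G.Adj (f a) (f b)

/-- The caterpillar with spine a path on `k` vertices, each spine vertex having `m` leaves. -/
def caterpillar (k m : ℕ) : SimpleGraph (Fin k ⊕ Fin k × Fin m) :=
  SimpleGraph.fromRel (fun a b =>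
    match a, b with
    | Sum.inl i, Sum.inl j => (i : ℕ) + 1 = (j : ℕ)
    | Sum.inl i, Sum.inr p => i = p.1
    | _, _ => False)

/-!
Embedding the star makes one vertex `c` adjacent to all others. Since `G` has no `K₃,₃` minor,
`c` and any two further vertices have at most two other common neighbours. Let `a ≠ c` be a
spine vertex of the double star, with its `(n - 2) / 2` leaves `A`. At least `k - 2` spine
vertices of the `k`-caterpillar avoid `c` and `a`, and each of them shares at most three of its
`n / k - 1` leaves with `{c} ∪ A`. The remaining leaves are pairwise disjoint and disjoint from
`A`, so `(n - 2) / 2 + (k - 2) (n / k - 4) ≤ n`, which fails for `k ≥ 5` and `n ≥ 6 k²`.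
-/

open Finset

lemma Contains.hasMinor {V W : Type*} {G : SimpleGraph V} {H : SimpleGraph W}
    (h : Contains G H) : HasMinor G H := by
  obtain ⟨f, hf⟩ := h
  exact ⟨fun w => {f w}, fun _ => Set.singleton_nonempty _, fun _ => Connected.of_subsingleton,
    fun _ _ hne => Set.disjoint_singleton.2 (f.injective.ne hne),
    fun w₁ w₂ hadj => ⟨f w₁, rfl, f w₂, rfl, hf hadj⟩⟩

lemma contains_completeBipartiteGraph {V : Type*} {G : SimpleGraph V} {p q : ℕ}
    (A B : Finset V) (hA : #A = p) (hB : #B = q) (hAB : Disjoint A B)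
    (hadj : ∀ a ∈ A, ∀ b ∈ B, G.Adj a b) :
    Contains G (completeBipartiteGraph (Fin p) (Fin q)) := by
  set eA : Fin p ≃ A := (A.equivFinOfCardEq hA).symm
  set eB : Fin q ≃ B := (B.equivFinOfCardEq hB).symm
  have hne : ∀ i j, (eA i : V) ≠ eB j := fun i j h =>
    disjoint_left.1 hAB (eA i).2 (h ▸ (eB j).2)
  refine ⟨⟨Sum.elim (fun i => (eA i : V)) (fun j => (eB j : V)),
    (Subtype.val_injective.comp eA.injective).sumElim
      (Subtype.val_injective.comp eB.injective) hne⟩, ?_⟩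
  rintro (i | i) (j | j) h
  · simp at h
  · exact hadj _ (eA i).2 _ (eB j).2
  · exact (hadj _ (eA j).2 _ (eB i).2).symm
  · simp at h

lemma card_le_two_of_forall_adj_of_not_hasMinor {V : Type*} {G : SimpleGraph V}
    (hG : ¬ HasMinor G (completeBipartiteGraph (Fin 3) (Fin 3)))
    {x y z : V} (hxy : x ≠ y) (hxz : x ≠ z) (hyz : y ≠ z) (s : Finset V)
    (hs : ∀ w ∈ s, G.Adj x w ∧ G.Adj y w ∧ G.Adj z w) : #s ≤ 2 := by
  classical
  by_contra! h
  obtain ⟨s', hs's, hs'⟩ := exists_subset_card_eq (show 3 ≤ #s by omega)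
  have hadj : ∀ a ∈ ({x, y, z} : Finset V), ∀ b ∈ s', G.Adj a b := by
    intro a ha b hb
    obtain ⟨hx, hy, hz⟩ := hs b (hs's hb)
    simp only [mem_insert, mem_singleton] at ha
    rcases ha with rfl | rfl | rfl <;> assumption
  refine hG (contains_completeBipartiteGraph {x, y, z} s'
    (card_eq_three.2 ⟨x, y, z, hxy, hxz, hyz, rfl⟩) hs' ?_ hadj).hasMinor
  exact disjoint_left.2 fun a ha ha' => (hadj a ha a ha').ne rfl

lemma caterpillar_adj_inl_inr (k m : ℕ) (i : Fin k) (j : Fin m) :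
    (caterpillar k m).Adj (.inl i) (.inr (i, j)) := by
  simp [caterpillar]

lemma Contains.exists_spine_leaves {V : Type*} {G : SimpleGraph V} {k m : ℕ}
    (h : Contains G (caterpillar k m)) :
    ∃ (s : Fin k ↪ V) (L : Fin k → Finset V), (∀ i, #(L i) = m) ∧
      (∀ i, ∀ w ∈ L i, G.Adj (s i) w) ∧ Pairwise fun i j => Disjoint (L i) (L j) := by
  obtain ⟨f, hf⟩ := h
  set leaf : Fin k × Fin m ↪ V := Function.Embedding.inr.trans f
  refine ⟨Function.Embedding.inl.trans f,
    fun i => univ.map ((Function.Embedding.sectR i (Fin m)).trans leaf), fun i => by simp,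
    fun i w hw => ?_, fun i j hij => ?_⟩
  · obtain ⟨j, -, rfl⟩ := mem_map.1 hw
    exact hf (caterpillar_adj_inl_inr k m i j)
  · refine disjoint_left.2 fun w hwi hwj => hij ?_
    obtain ⟨a, -, rfl⟩ := mem_map.1 hwi
    obtain ⟨b, -, hb⟩ := mem_map.1 hwj
    exact (congrArg Prod.fst (leaf.injective hb)).symm

lemma adj_of_card_eq_card_sub_one {V : Type*} [Fintype V] {G : SimpleGraph V} {c : V}
    {L : Finset V} (hL : #L = Fintype.card V - 1) (hadj : ∀ w ∈ L, G.Adj c w) :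
    ∀ w, w ≠ c → G.Adj c w := by
  classical
  have hsub : L ⊆ univ.erase c := fun w hw => mem_erase.2 ⟨(hadj w hw).ne', mem_univ w⟩
  have hL' : L = univ.erase c :=
    eq_of_subset_of_card_le hsub (by rw [card_erase_of_mem (mem_univ c), card_univ, hL])
  exact fun w hw => hadj w (hL' ▸ mem_erase.2 ⟨hw, mem_univ w⟩)

lemma Function.Embedding.card_le_card_filter_notMem_add {α V : Type*} [Fintype α]
    [DecidableEq V] (f : α ↪ V) (S : Finset V) :
    Fintype.card α ≤ #{i | f i ∉ S} + #S := by
  have hS : #{i | f i ∈ S} ≤ #S :=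
    card_le_card_of_injOn f (fun i hi => (mem_filter.1 hi).2) f.injective.injOn
  have := card_filter_add_card_filter_not (s := (univ : Finset α)) (fun i => f i ∈ S)
  rw [card_univ] at this
  omega

lemma card_add_sum_card_sdiff_le {V ι : Type*} [Fintype V] [DecidableEq V] (B : Finset V)
    {L : ι → Finset V} (hL : Pairwise fun i j => Disjoint (L i) (L j)) (t : Finset ι) :
    #B + ∑ i ∈ t, #(L i \ B) ≤ Fintype.card V := by
  have hdisj : (t : Set ι).PairwiseDisjoint fun i => L i \ B :=
    fun i _ j _ hij => (hL hij).mono sdiff_subset sdiff_subset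
  have hB : Disjoint B (t.biUnion fun i => L i \ B) :=
    (disjoint_biUnion_right _ _ _).2 fun _ _ => disjoint_sdiff
  rw [← card_biUnion hdisj, ← card_union_of_disjoint hB]
  exact card_le_univ _

/-- Apart from `c`, a vertex of `L ∩ A` is a common neighbour of `c`, `a` and `x`. -/
lemma card_le_card_sdiff_insert_add_three {V : Type*} [DecidableEq V] {G : SimpleGraph V}
    (hG : ¬ HasMinor G (completeBipartiteGraph (Fin 3) (Fin 3)))
    {c a x : V} (hc : ∀ w, w ≠ c → G.Adj c w) (hca : c ≠ a) (hcx : c ≠ x) (hax : a ≠ x)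
    {A L : Finset V} (hA : ∀ w ∈ A, G.Adj a w) (hL : ∀ w ∈ L, G.Adj x w) :
    #L ≤ #(L \ insert c A) + 3 := by
  have hcommon : #((L ∩ A).erase c) ≤ 2 := by
    refine card_le_two_of_forall_adj_of_not_hasMinor hG hca hcx hax _ fun w hw => ?_
    obtain ⟨hwc, hw⟩ := mem_erase.1 hw
    exact ⟨hc w hwc, hA w (mem_inter.1 hw).2, hL w (mem_inter.1 hw).1⟩
  have hsub : L ∩ insert c A ⊆ insert c ((L ∩ A).erase c) := by
    intro w hw
    simp only [mem_inter, mem_insert, mem_erase] at hw ⊢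
    tauto
  have := (card_le_card hsub).trans (card_insert_le _ _)
  have := card_sdiff_add_card_inter L (insert c A)
  omega

lemma mul_sub_two_le_sum_card_sdiff_insert {V : Type*} [DecidableEq V] {G : SimpleGraph V}
    (hG : ¬ HasMinor G (completeBipartiteGraph (Fin 3) (Fin 3)))
    {c a : V} (hc : ∀ w, w ≠ c → G.Adj c w) (hca : c ≠ a)
    {A : Finset V} (hA : ∀ w ∈ A, G.Adj a w) {k m : ℕ} (s : Fin k ↪ V) {L : Fin k → Finset V}
    (hL : ∀ i, #(L i) = m) (hLadj : ∀ i, ∀ w ∈ L i, G.Adj (s i) w) :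
    (k - 2) * (m - 3) ≤ ∑ i ∈ {i | s i ∉ ({c, a} : Finset V)}, #(L i \ insert c A) := by
  set t : Finset (Fin k) := {i | s i ∉ ({c, a} : Finset V)}
  have ht : k - 2 ≤ #t := by
    have h : Fintype.card (Fin k) ≤ #t + #{c, a} := s.card_le_card_filter_notMem_add _
    have := card_le_two (a := c) (b := a)
    rw [Fintype.card_fin] at h
    omega
  have hleaf : ∀ i ∈ t, m - 3 ≤ #(L i \ insert c A) := by
    intro i hi
    simp only [t, mem_filter, mem_insert, mem_singleton, not_or] at hi
    have := card_le_card_sdiff_insert_add_three hG hc hca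
      (Ne.symm hi.2.1) (Ne.symm hi.2.2) hA (hLadj i)
    rw [hL i] at this
    omega
  calc (k - 2) * (m - 3) ≤ #t * (m - 3) := by gcongr
    _ ≤ _ := by simpa using card_nsmul_le_sum t _ _ hleaf

lemma mul_lt_sub_two_div_two_add_mul {k q : ℕ} (hk : 5 ≤ k) (hq : 6 * k ≤ q) :
    k * q < (k * q - 2) / 2 + (k - 2) * (q - 1 - 3) := by
  obtain ⟨K, rfl⟩ : ∃ K, k = K + 5 := ⟨k - 5, by omega⟩
  obtain ⟨Q, rfl⟩ : ∃ Q, q = Q + 6 * K + 30 := ⟨q - 6 * K - 30, by omega⟩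
  rw [show K + 5 - 2 = K + 3 by omega, show Q + 6 * K + 30 - 1 - 3 = Q + 6 * K + 26 by omega]
  have : (K + 5) * (Q + 6 * K + 30) + 4 ≤ 2 * ((K + 3) * (Q + 6 * K + 26)) := by nlinarith
  omega

/-- If `k ≥ 5` and `n ≥ 6k²` with `k ∣ n`, then no planar graph on `n` vertices contains the
star `C_{n,1}`, the double star `C_{n,2}` (two adjacent spine vertices with `(n−2)/2` leaves
each) and the `k`-caterpillar `C_{n,k}` simultaneously as subgraphs. -/
theorem no_planar_universal_for_three_caterpillars (k n : ℕ) (hk : 5 ≤ k)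
    (hn : 6 * k ^ 2 ≤ n) (hdvd : k ∣ n)
    {V : Type*} [Fintype V] (G : SimpleGraph V) (hcard : Fintype.card V = n)
    (hplanar : IsPlanar G) :
    ¬ (Contains G (caterpillar 1 (n - 1)) ∧
       Contains G (caterpillar 2 ((n - 2) / 2)) ∧
       Contains G (caterpillar k (n / k - 1))) := by
  classical
  subst hcard
  rintro ⟨hstar, hdouble, hcat⟩
  obtain ⟨s₁, L₁, hL₁, hL₁adj, -⟩ := hstar.exists_spine_leaves
  have hc := adj_of_card_eq_card_sub_one (hL₁ 0) (hL₁adj 0)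
  obtain ⟨s₂, L₂, hL₂, hL₂adj, -⟩ := hdouble.exists_spine_leaves
  obtain ⟨i₂, hi₂⟩ : ∃ i, s₁ 0 ≠ s₂ i := by
    by_contra! h
    exact absurd (s₂.injective ((h 0).symm.trans (h 1))) (by decide)
  obtain ⟨s, L, hL, hLadj, hLdisj⟩ := hcat.exists_spine_leaves
  have hleaves := mul_sub_two_le_sum_card_sdiff_insert hplanar.2 hc hi₂ (hL₂adj i₂) s hL hLadj
  have hcount := card_add_sum_card_sdiff_le (insert (s₁ 0) (L₂ i₂)) hLdisj
    {i | s i ∉ ({s₁ 0, s₂ i₂} : Finset V)}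
  have hA := hL₂ i₂ ▸ card_le_card (subset_insert (s₁ 0) (L₂ i₂))
  have hq : 6 * k ≤ Fintype.card V / k := (Nat.le_div_iff_mul_le (by omega)).2 (by nlinarith)
  have := mul_lt_sub_two_div_two_add_mul hk hq
  rw [Nat.mul_div_cancel' hdvd] at this
  omega
end

section
/- Any planar graph that contains every n-vertex planar graph as a subgraph has at least (n−3)·k_n vertices, where k_n is the number of (combinatorially distinct) 4-connected planar triangulations on n vertices. -/
open SimpleGraph

/-- A graph is 4-connected if it has at least 5 vertices and deleting any at most 3 vertices
leaves a connected graph. -/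
def FourConnected {V : Type*} [Fintype V] [DecidableEq V] (G : SimpleGraph V) : Prop :=
  5 ≤ Fintype.card V ∧
  ∀ S : Finset V, S.card ≤ 3 → (G.induce ((↑(Sᶜ) : Set V))).Connected

/-- A (planar) triangulation is a maximal planar graph: adding any missing edge destroys
planarity. -/
def IsTriangulation {V : Type*} (G : SimpleGraph V) : Prop :=
  IsPlanar G ∧ ∀ a b : V, a ≠ b → ¬ G.Adj a b →
    ¬ IsPlanar (G ⊔ SimpleGraph.fromEdgeSet {s(a, b)})

/-- Isomorphism classes of 4-connected planar triangulations on `n` vertices. -/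
def triSetoid (n : ℕ) :
    Setoid {G : SimpleGraph (Fin n) // IsTriangulation G ∧ FourConnected G} where
  r G H := Nonempty (G.1 ≃g H.1)
  iseqv := ⟨fun _ => ⟨RelIso.refl _⟩, fun ⟨e⟩ => ⟨e.symm⟩, fun ⟨e⟩ ⟨f⟩ => ⟨e.trans f⟩⟩

namespace PUniv
variable {V : Type*} {W : Type*} (G : SimpleGraph V)

/-- image of a connected induced subgraph under a graph-homomorphism-on-sets is connected -/
lemma conn_image {T : SimpleGraph W} {f : W → V} (hf : ∀ a b, T.Adj a b → G.Adj (f a) (f b))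
    {s : Set W} (h : (T.induce s).Connected) : (G.induce (f '' s)).Connected := by
  refine Connected.map
    (⟨fun x => ⟨f x.1, ⟨x.1, x.2, rfl⟩⟩, fun hadj => hf _ _ hadj⟩ : T.induce s →g G.induce (f '' s))
    ?_ h
  rintro ⟨v, a, ha, rfl⟩
  exact ⟨⟨a, ha⟩, rfl⟩

lemma conn_walks {s : Set V} (h : (G.induce s).Connected)
    {a b : V} (ha : a ∈ s) (hb : b ∈ s) :
    ∃ p : G.Walk a b, ∀ x ∈ p.support, x ∈ s := by
  obtain ⟨p⟩ := h.preconnected ⟨a, ha⟩ ⟨b, hb⟩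
  refine ⟨p.map (⟨Subtype.val, fun hadj => hadj⟩ : G.induce s →g G), ?_⟩
  intro x hx
  rw [Walk.support_map, List.mem_map] at hx
  obtain ⟨⟨y, hy⟩, _, rfl⟩ := hx
  exact hy

lemma conn_singleton (v : V) : (G.induce {v}).Connected := by
  rw [induce_singleton_eq_top]; exact connected_top

lemma conn_insert {c : Set V} (hc : (G.induce c).Connected) {v y : V}
    (hy : y ∈ c) (hadj : G.Adj v y) : (G.induce (insert v c)).Connected := by
  rw [Set.insert_eq]
  exact connected_induce_union (conn_singleton G v).preconnected hc.preconnected rfl hy hadj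

/-- the set of vertices reachable from `x₀` by walks staying inside `t` -/
def walkSet (x₀ : V) (t : Set V) : Set V :=
  {v | ∃ p : G.Walk x₀ v, ∀ x ∈ p.support, x ∈ t}

lemma mem_walkSet_self {x₀ : V} {t : Set V} (hx₀ : x₀ ∈ t) : x₀ ∈ walkSet G x₀ t :=
  ⟨Walk.nil, by simp [hx₀]⟩

lemma walkSet_subset {x₀ : V} {t : Set V} : walkSet G x₀ t ⊆ t := by
  rintro v ⟨p, hp⟩
  exact hp v p.end_mem_support

lemma walkSet_closed {x₀ : V} {t : Set V} {v w : V} (hv : v ∈ walkSet G x₀ t)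
    (hadj : G.Adj v w) (hw : w ∈ t) : w ∈ walkSet G x₀ t := by
  obtain ⟨p, hp⟩ := hv
  refine ⟨p.concat hadj, ?_⟩
  intro x hx
  rw [Walk.support_concat] at hx
  rw [List.mem_append] at hx
  rcases hx with h | h
  · exact hp x h
  · rwa [List.mem_singleton.1 h]

lemma conn_walkSet {x₀ : V} {t : Set V} (hx₀ : x₀ ∈ t) :
    (G.induce (walkSet G x₀ t)).Connected := by
  classical
  refine G.induce_connected_of_patches x₀ (mem_walkSet_self G hx₀) ?_
  intro v hv
  obtain ⟨p, hp⟩ := hv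
  refine ⟨{x | x ∈ p.support}, ?_, p.start_mem_support, p.end_mem_support, ?_⟩
  · intro w hw
    exact ⟨p.takeUntil w hw, fun x hx => hp x (Walk.support_takeUntil_subset p hw hx)⟩
  · exact (p.connected_induce_support).preconnected _ _

lemma walk_mem_walkSet {x₀ : V} {t : Set V} {a b : V} (p : G.Walk a b)
    (ha : a ∈ walkSet G x₀ t) (hp : ∀ x ∈ p.support, x ∈ t) : b ∈ walkSet G x₀ t := by
  induction p with
  | nil => exact ha
  | @cons u v w h q ih =>
    refine ih ?_ ?_
    · exact walkSet_closed G ha h (hp v (by simp))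
    · intro x hx
      exact hp x (by rw [Walk.support_cons]; exact List.mem_cons_of_mem _ hx)

lemma conn_subset_walkSet {x₀ : V} {t D : Set V} (hD : (G.induce D).Connected)
    (hDt : D ⊆ t) (hmeet : (D ∩ walkSet G x₀ t).Nonempty) : D ⊆ walkSet G x₀ t := by
  obtain ⟨d₀, hd₀D, hd₀⟩ := hmeet
  intro d hd
  obtain ⟨p, hp⟩ := conn_walks G hD hd₀D hd
  exact walk_mem_walkSet G p hd₀ (fun x hx => hDt (hp x hx))

/-- separation: if an induced connected set splits into a part satisfying `P` and one not,
with no edges crossing, contradiction. -/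
lemma walk_prop {P : V → Prop} {s : Set V} {a b : V} (p : G.Walk a b)
    (hp : ∀ x ∈ p.support, x ∈ s) (ha : P a)
    (hsep : ∀ x y, x ∈ s → y ∈ s → G.Adj x y → P x → P y) : P b := by
  induction p with
  | nil => exact ha
  | @cons u v w h q ih =>
    refine ih (fun x hx => hp x (by rw [Walk.support_cons]; exact List.mem_cons_of_mem _ hx))
      (hsep u v (hp u (by simp)) (hp v (by simp)) h ha)

end PUniv

namespace PUniv
variable {V : Type*} {W : Type*} {X : Type*} (G : SimpleGraph V)

lemma conn_unionWalk {H : SimpleGraph W} (f : W → Set V)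
    (hconn : ∀ y, (G.induce (f y)).Connected)
    (hedge : ∀ x y, H.Adj x y → ∃ p ∈ f x, ∃ r ∈ f y, G.Adj p r) :
    ∀ {a b : W} (q : H.Walk a b), (G.induce (⋃ y ∈ {z | z ∈ q.support}, f y)).Connected := by
  intro a b q
  induction q with
  | @nil u =>
    have : (⋃ y ∈ {z : W | z ∈ (Walk.nil : H.Walk u u).support}, f y) = f u := by
      simp [Walk.support_nil]
    rw [this]; exact hconn u
  | @cons u v w h q ih =>
    have hset : (⋃ y ∈ {z : W | z ∈ (Walk.cons h q).support}, f y)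
        = f u ∪ (⋃ y ∈ {z : W | z ∈ q.support}, f y) := by
      rw [Walk.support_cons]
      ext x
      simp only [Set.mem_setOf_eq, List.mem_cons, Set.mem_iUnion, Set.mem_union, exists_prop]
      constructor
      · rintro ⟨y, hy | hy, hx⟩
        · exact Or.inl (hy ▸ hx)
        · exact Or.inr ⟨y, hy, hx⟩
      · rintro (hx | ⟨y, hy, hx⟩)
        · exact ⟨u, Or.inl rfl, hx⟩
        · exact ⟨y, Or.inr hy, hx⟩
    rw [hset]
    obtain ⟨p, hp, r, hr, hpr⟩ := hedge u v h
    refine connected_induce_union (hconn u).preconnected ih.preconnected hp ?_ hpr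
    exact Set.mem_biUnion (show v ∈ {z : W | z ∈ q.support} from q.start_mem_support) hr

lemma hasMinor_trans {H : SimpleGraph W} {K : SimpleGraph X}
    (hGH : HasMinor G H) (hHK : HasMinor H K) : HasMinor G K := by
  obtain ⟨f, fne, fconn, fdisj, fedge⟩ := hGH
  obtain ⟨g, gne, gconn, gdisj, gedge⟩ := hHK
  refine ⟨fun w => ⋃ x ∈ g w, f x, ?_, ?_, ?_, ?_⟩
  · intro w
    obtain ⟨x, hx⟩ := gne w
    obtain ⟨v, hv⟩ := fne x
    exact ⟨v, Set.mem_biUnion hx hv⟩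
  · intro w
    obtain ⟨x₀, hx₀⟩ := gne w
    obtain ⟨u₀, hu₀⟩ := fne x₀
    refine G.induce_connected_of_patches u₀ (Set.mem_biUnion hx₀ hu₀) ?_
    intro v hv
    rw [Set.mem_iUnion₂] at hv
    obtain ⟨x₁, hx₁, hvx₁⟩ := hv
    obtain ⟨q, hq⟩ := conn_walks H (gconn w) hx₀ hx₁
    refine ⟨⋃ y ∈ {z | z ∈ q.support}, f y, ?_, ?_, ?_, ?_⟩
    · refine Set.iUnion₂_subset ?_
      intro y hy
      exact Set.subset_biUnion_of_mem (hq y hy)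
    · exact Set.mem_biUnion (show x₀ ∈ {z | z ∈ q.support} from q.start_mem_support) hu₀
    · exact Set.mem_biUnion (show x₁ ∈ {z | z ∈ q.support} from q.end_mem_support) hvx₁
    · exact (conn_unionWalk G f fconn fedge q).preconnected _ _
  · intro w w' hww'
    rw [Set.disjoint_left]
    rintro a ha ha'
    rw [Set.mem_iUnion₂] at ha ha'
    obtain ⟨x, hx, hax⟩ := ha
    obtain ⟨x', hx', hax'⟩ := ha'
    by_cases hxx' : x = x'
    · subst hxx'
      exact Set.disjoint_left.1 (gdisj hww') hx hx'
    · exact Set.disjoint_left.1 (fdisj hxx') hax hax'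
  · intro w₁ w₂ hadj
    obtain ⟨x, hx, y, hy, hxy⟩ := gedge hadj
    obtain ⟨p, hp, r, hr, hpr⟩ := fedge hxy
    exact ⟨p, Set.mem_biUnion hx hp, r, Set.mem_biUnion hy hr, hpr⟩

lemma contains_hasMinor {H : SimpleGraph W} (h : Contains G H) : HasMinor G H := by
  obtain ⟨f, hf⟩ := h
  refine ⟨fun w => {f w}, fun w => ⟨f w, rfl⟩, fun w => conn_singleton G (f w), ?_, ?_⟩
  · intro w w' hww'
    simp [Set.disjoint_singleton_left, f.injective.ne hww']
  · intro w₁ w₂ hadj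
    exact ⟨f w₁, rfl, f w₂, rfl, hf hadj⟩

lemma not_isPlanar_elim {H : SimpleGraph W} (h : ¬ IsPlanar H) :
    HasMinor H (completeGraph (Fin 5)) ∨ HasMinor H (completeBipartiteGraph (Fin 3) (Fin 3)) := by
  unfold IsPlanar at h
  push_neg at h
  by_cases h5 : HasMinor H (completeGraph (Fin 5))
  · exact Or.inl h5
  · exact Or.inr (h h5)

lemma planar_no_bad_minor {H : SimpleGraph W} (hG : IsPlanar G)
    (hm : HasMinor G H) (hH : ¬ IsPlanar H) : False := by
  rcases not_isPlanar_elim hH with h | h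
  · exact hG.1 (hasMinor_trans G hm h)
  · exact hG.2 (hasMinor_trans G hm h)

end PUniv

namespace PUniv
variable {V : Type*} (G : SimpleGraph V)

lemma hasMinor_addEdge {n : ℕ} (T : SimpleGraph (Fin n)) (f : Fin n ↪ V)
    (hf : ∀ a b, T.Adj a b → G.Adj (f a) (f b)) (c : Set V)
    (hc : (G.induce c).Connected) (hdisj : ∀ x, f x ∉ c)
    {i j : Fin n} (hij : i ≠ j)
    (hi : ∃ w ∈ c, G.Adj (f i) w) (hj : ∃ w ∈ c, G.Adj (f j) w) :
    HasMinor G (T ⊔ SimpleGraph.fromEdgeSet {s(i, j)}) := by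
  classical
  obtain ⟨wi, hwi, hwiadj⟩ := hi
  obtain ⟨wj, hwj, hwjadj⟩ := hj
  set m : Fin n → Set V := fun x => if x = i then insert (f i) c else {f x} with hm
  have h1 : m i = insert (f i) c := by simp [hm]
  have h2 : ∀ z, z ≠ i → m z = {f z} := fun z hz => by simp [hm, hz]
  have hmem : ∀ z : Fin n, f z ∈ m z := by
    intro z
    by_cases hz : z = i
    · subst hz; rw [h1]; exact Set.mem_insert _ _
    · rw [h2 z hz]; rfl
  refine ⟨m, fun x => ⟨f x, hmem x⟩, ?_, ?_, ?_⟩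
  · intro x
    by_cases hx : x = i
    · subst hx; rw [h1]; exact conn_insert G hc hwi hwiadj
    · rw [h2 x hx]; exact conn_singleton G (f x)
  · intro x y hxy
    have notmem : ∀ z, z ≠ i → f z ∉ insert (f i) c := by
      intro z hz hmem'
      rcases Set.mem_insert_iff.1 hmem' with h | h
      · exact hz (f.injective h)
      · exact hdisj z h
    by_cases hx : x = i
    · subst hx
      rw [h1, h2 y (Ne.symm hxy), Set.disjoint_singleton_right]
      exact notmem y (Ne.symm hxy)
    · by_cases hy : y = i
      · subst hy
        rw [h1, h2 x hx, Set.disjoint_singleton_left]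
        exact notmem x hx
      · rw [h2 x hx, h2 y hy, Set.disjoint_singleton_left, Set.mem_singleton_iff]
        exact fun h => hxy (f.injective h)
  · intro a b hadj
    rcases hadj with hTadj | hEadj
    · exact ⟨f a, hmem a, f b, hmem b, hf a b hTadj⟩
    · rw [fromEdgeSet_adj, Set.mem_singleton_iff, Sym2.eq_iff] at hEadj
      have hmi : wj ∈ m i := by rw [h1]; exact Set.mem_insert_of_mem _ hwj
      have hmj : f j ∈ m j := hmem j
      rcases hEadj.1 with ⟨ha, hb⟩ | ⟨ha, hb⟩
      · rw [ha, hb]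
        exact ⟨wj, hmi, f j, hmj, hwjadj.symm⟩
      · rw [ha, hb]
        exact ⟨f j, hmj, wj, hmi, hwjadj⟩

end PUniv

namespace PUniv
variable {V : Type*} (G : SimpleGraph V)

lemma hasMinor_K5 (v : Fin 4 → V) (hv : Function.Injective v)
    (hadj : ∀ i j : Fin 4, i ≠ j → G.Adj (v i) (v j)) (c : Set V)
    (hc : (G.induce c).Connected) (hd : ∀ i, v i ∉ c)
    (hce : ∀ i, ∃ w ∈ c, G.Adj (v i) w) :
    HasMinor G (completeGraph (Fin 5)) := by
  classical
  set m : Fin 5 → Set V := fun i => if h : (i : ℕ) < 4 then {v ⟨i, h⟩} else c with hm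
  have hml : ∀ (i : Fin 5) (h : (i : ℕ) < 4), m i = {v ⟨i, h⟩} := by
    intro i h; simp [hm, h]
  have hmr : ∀ (i : Fin 5), ¬ (i : ℕ) < 4 → m i = c := by
    intro i h; simp [hm, h]
  refine ⟨m, ?_, ?_, ?_, ?_⟩
  · intro i
    by_cases h : (i : ℕ) < 4
    · rw [hml i h]; exact ⟨_, rfl⟩
    · rw [hmr i h]; obtain ⟨⟨w, hw⟩⟩ := hc.nonempty
      exact ⟨w, hw⟩
  · intro i
    by_cases h : (i : ℕ) < 4
    · rw [hml i h]; exact conn_singleton G _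
    · rw [hmr i h]; exact hc
  · intro x y hxy
    by_cases hx : (x : ℕ) < 4 <;> by_cases hy : (y : ℕ) < 4
    · rw [hml x hx, hml y hy, Set.disjoint_singleton_left, Set.mem_singleton_iff]
      intro h
      have := congrArg Fin.val (hv h)
      simp only [] at this
      exact hxy (Fin.ext (by omega))
    · rw [hml x hx, hmr y hy, Set.disjoint_singleton_left]
      exact hd _
    · rw [hmr x hx, hml y hy, Set.disjoint_singleton_right]
      exact hd _
    · exact absurd (Fin.ext (by omega : (x : ℕ) = y)) hxy
  · intro x y hxy
    have hne : x ≠ y := by simpa [completeGraph] using hxy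
    by_cases hx : (x : ℕ) < 4 <;> by_cases hy : (y : ℕ) < 4
    · refine ⟨v ⟨x, hx⟩, by rw [hml x hx]; rfl, v ⟨y, hy⟩, by rw [hml y hy]; rfl, ?_⟩
      refine hadj _ _ fun h => ?_
      have := congrArg Fin.val h
      simp only [] at this
      exact hne (Fin.ext (by omega))
    · obtain ⟨w, hw, hwadj⟩ := hce ⟨x, hx⟩
      exact ⟨v ⟨x, hx⟩, by rw [hml x hx]; rfl, w, by rw [hmr y hy]; exact hw, hwadj⟩
    · obtain ⟨w, hw, hwadj⟩ := hce ⟨y, hy⟩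
      exact ⟨w, by rw [hmr x hx]; exact hw, v ⟨y, hy⟩, by rw [hml y hy]; rfl, hwadj.symm⟩
    · exact absurd (Fin.ext (by omega : (x : ℕ) = y)) hne

end PUniv

namespace PUniv
variable {V : Type*} (G : SimpleGraph V)

lemma attach_ncard_le {n : ℕ} (hG : IsPlanar G) {T : SimpleGraph (Fin n)}
    (hT : IsTriangulation T) (f : Fin n ↪ V) (hf : ∀ a b, T.Adj a b → G.Adj (f a) (f b))
    {c : Set V} (hc : (G.induce c).Connected) (hdisj : ∀ x, f x ∉ c) :
    {x : Fin n | ∃ w ∈ c, G.Adj (f x) w}.ncard ≤ 3 := by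
  classical
  set att := {x : Fin n | ∃ w ∈ c, G.Adj (f x) w} with hatt
  by_contra hcard
  push_neg at hcard
  obtain ⟨t, hts, ht4⟩ := Set.exists_subset_card_eq (s := att) (n := 4) (by omega)
  have htfin : t.Finite := Set.toFinite t
  have hF : htfin.toFinset.card = 4 := by
    rw [← Set.ncard_eq_toFinset_card t htfin, ht4]
  set u : Fin 4 → Fin n := fun i => (htfin.toFinset.equivFin.symm (Fin.cast hF.symm i)).1 with hu
  have humem : ∀ i, u i ∈ att := by
    intro i
    have := (htfin.toFinset.equivFin.symm (Fin.cast hF.symm i)).2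
    rw [Set.Finite.mem_toFinset] at this
    exact hts this
  have huinj : Function.Injective u := by
    intro a b hab
    have := Subtype.ext hab
    have h2 := htfin.toFinset.equivFin.symm.injective this
    exact Fin.ext (by simpa using congrArg Fin.val h2)
  by_cases hall : ∀ i j : Fin 4, i ≠ j → T.Adj (u i) (u j)
  · refine hG.1 (hasMinor_K5 G (fun i => f (u i)) (f.injective.comp huinj)
      (fun i j hij => hf _ _ (hall i j hij)) c hc (fun i => hdisj (u i)) ?_)
    intro i
    exact humem i
  · push_neg at hall
    obtain ⟨i, j, hij, hnadj⟩ := hall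
    have huij : u i ≠ u j := fun h => hij (huinj h)
    exact planar_no_bad_minor G hG
      (hasMinor_addEdge G T f hf c hc hdisj huij (humem i) (humem j))
      (hT.2 (u i) (u j) huij hnadj)

lemma iso_of_same_range {n : ℕ} (hG : IsPlanar G) {TX TY : SimpleGraph (Fin n)}
    (hTX : IsTriangulation TX) (hTY : IsTriangulation TY)
    (fX fY : Fin n ↪ V) (hfX : ∀ a b, TX.Adj a b → G.Adj (fX a) (fX b))
    (hfY : ∀ a b, TY.Adj a b → G.Adj (fY a) (fY b))
    (hr : Set.range fX = Set.range fY) : Nonempty (TX ≃g TY) := by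
  classical
  have hmem : ∀ x, ∃ y, fY y = fX x := by
    intro x
    have : fX x ∈ Set.range fY := hr ▸ Set.mem_range_self x
    exact this
  set g : Fin n → Fin n := fun x => (hmem x).choose with hgdef
  have hg : ∀ x, fY (g x) = fX x := fun x => (hmem x).choose_spec
  have hginj : Function.Injective g := by
    intro a b hab
    apply fX.injective
    rw [← hg a, ← hg b, hab]
  have hgbij : Function.Bijective g := (Finite.injective_iff_bijective).1 hginj
  set e := Equiv.ofBijective g hgbij with he
  have forward : ∀ a b, TX.Adj a b → TY.Adj (g a) (g b) := by
    intro a b hadj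
    by_contra hn
    have hne : g a ≠ g b := fun h => TX.irrefl (hginj h ▸ hadj)
    refine planar_no_bad_minor G hG (contains_hasMinor G ⟨fY, ?_⟩)
      (hTY.2 (g a) (g b) hne hn)
    intro x y hxy
    rcases hxy with h | h
    · exact hfY x y h
    · rw [fromEdgeSet_adj, Set.mem_singleton_iff, Sym2.eq_iff] at h
      rcases h.1 with ⟨rfl, rfl⟩ | ⟨rfl, rfl⟩
      · rw [hg, hg]; exact hfX a b hadj
      · rw [hg, hg]; exact (hfX a b hadj).symm
  have backward : ∀ a b, TY.Adj (g a) (g b) → TX.Adj a b := by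
    intro a b hadj
    by_contra hn
    have hne : a ≠ b := fun h => TY.irrefl (h ▸ hadj)
    refine planar_no_bad_minor G hG (contains_hasMinor G ⟨fX, ?_⟩)
      (hTX.2 a b hne hn)
    intro x y hxy
    rcases hxy with h | h
    · exact hfX x y h
    · rw [fromEdgeSet_adj, Set.mem_singleton_iff, Sym2.eq_iff] at h
      rcases h.1 with ⟨rfl, rfl⟩ | ⟨rfl, rfl⟩
      · rw [← hg, ← hg]; exact hfY _ _ hadj
      · rw [← hg, ← hg]; exact (hfY _ _ hadj).symm
  exact ⟨⟨e, fun {a b} => ⟨backward a b, forward a b⟩⟩⟩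

end PUniv

namespace PUniv
variable {V : Type*} (G : SimpleGraph V)

lemma copy_structure {n : ℕ} (hG : IsPlanar G) {TX TY : SimpleGraph (Fin n)}
    (hTX : IsTriangulation TX) (h4X : FourConnected TX) (hTY : IsTriangulation TY)
    (hiso : ¬ Nonempty (TX ≃g TY))
    (fX fY : Fin n ↪ V) (hfX : ∀ a b, TX.Adj a b → G.Adj (fX a) (fX b))
    (hfY : ∀ a b, TY.Adj a b → G.Adj (fY a) (fY b)) :
    ∃ D : Set (Fin n),
      D.Nonempty ∧
      (∀ x ∈ D, fX x ∉ Set.range fY) ∧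
      (G.induce (fX '' D)).Connected ∧
      (∀ x, x ∉ D → fX x ∈ Set.range fY) ∧
      (∀ x, x ∉ D → ∃ z ∈ D, TX.Adj x z) ∧
      Dᶜ.ncard ≤ 3 := by
  classical
  set A := {x : Fin n | fX x ∈ Set.range fY} with hA
  have hD'ne : Aᶜ.Nonempty := by
    rw [Set.nonempty_compl]
    intro huniv
    have hsub : Set.range fX ⊆ Set.range fY := by
      rintro v ⟨x, rfl⟩
      have : x ∈ A := huniv ▸ Set.mem_univ x
      exact this
    have hc1 : (Set.range fX).ncard = (Set.univ : Set (Fin n)).ncard := by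
      rw [← Set.image_univ, Set.ncard_image_of_injective _ fX.injective]
    have hc2 : (Set.range fY).ncard = (Set.univ : Set (Fin n)).ncard := by
      rw [← Set.image_univ, Set.ncard_image_of_injective _ fY.injective]
    have hcard : (Set.range fY).ncard ≤ (Set.range fX).ncard :=
      le_of_eq (hc2.trans hc1.symm)
    have heq : Set.range fX = Set.range fY :=
      Set.eq_of_subset_of_ncard_le hsub hcard (Set.finite_range fY)
    exact hiso (iso_of_same_range G hG hTX hTY fX fY hfX hfY heq)
  obtain ⟨x₀, hx₀⟩ := hD'ne
  set C := walkSet TX x₀ Aᶜ with hC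
  have hCsub : C ⊆ Aᶜ := walkSet_subset TX
  have hx₀C : x₀ ∈ C := mem_walkSet_self TX hx₀
  have hCconn : (TX.induce C).Connected := conn_walkSet TX hx₀
  set N := {x : Fin n | x ∉ C ∧ ∃ z ∈ C, TX.Adj x z} with hN
  have hNA : N ⊆ A := by
    rintro x ⟨hxC, z, hzC, hadj⟩
    by_contra hxA
    exact hxC (walkSet_closed TX hzC hadj.symm hxA)
  -- the image of C is connected in G and disjoint from the range of fY
  have himgconn : (G.induce (fX '' C)).Connected := conn_image G hfX hCconn
  have himgdisj : ∀ z, fY z ∉ fX '' C := by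
    rintro z ⟨x, hxC, hfx⟩
    exact (hCsub hxC) ⟨z, hfx.symm⟩
  -- bound |N| by the attachment number of the connected set fX '' C on the copy of TY
  have hattle : {z : Fin n | ∃ w ∈ fX '' C, G.Adj (fY z) w}.ncard ≤ 3 :=
    attach_ncard_le G hG hTY fY hfY himgconn himgdisj
  set φ : Fin n → Fin n := fun x =>
    if h : fX x ∈ Set.range fY then h.choose else x with hφ
  have hφspec : ∀ x ∈ A, fY (φ x) = fX x := by
    intro x hx
    simp only [hφ, dif_pos (show fX x ∈ Set.range fY from hx)]
    exact (show fX x ∈ Set.range fY from hx).choose_spec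
  have hNcard : N.ncard ≤ 3 := by
    have hinj : Set.InjOn φ N := by
      intro a ha b hb hab
      apply fX.injective
      rw [← hφspec a (hNA ha), ← hφspec b (hNA hb), hab]
    have himg : φ '' N ⊆ {z : Fin n | ∃ w ∈ fX '' C, G.Adj (fY z) w} := by
      rintro _ ⟨x, hx, rfl⟩
      have hx' := hx
      obtain ⟨hxC, z, hzC, hadj⟩ := hx'
      refine ⟨fX z, ⟨z, hzC, rfl⟩, ?_⟩
      rw [hφspec x (hNA hx)]
      exact hfX x z hadj

    calc N.ncard = (φ '' N).ncard := (Set.ncard_image_of_injOn hinj).symm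
      _ ≤ _ := Set.ncard_le_ncard himg (Set.toFinite _)
      _ ≤ 3 := hattle
  -- 4-connectivity: the complement of N is connected; it must all lie in C
  set S : Finset (Fin n) := N.toFinite.toFinset with hS
  have hScard : S.card ≤ 3 := by
    rw [hS, ← Set.ncard_eq_toFinset_card]
    exact hNcard
  have hconnS := h4X.2 S hScard
  have hSc : (↑(Sᶜ) : Set (Fin n)) = {x | x ∉ N} := by
    ext x
    simp only [Finset.coe_compl, Set.mem_compl_iff, Finset.mem_coe, hS,
      Set.Finite.mem_toFinset, Set.mem_setOf_eq]
  have hCinS : ∀ x, x ∉ N → x ∈ C := by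
    intro v hv
    have hx₀S : x₀ ∈ ({x | x ∉ N} : Set (Fin n)) := fun h => h.1 hx₀C
    have hvS : v ∈ ({x | x ∉ N} : Set (Fin n)) := hv
    rw [hSc] at hconnS
    obtain ⟨p, hp⟩ := conn_walks TX hconnS hx₀S hvS
    refine walk_prop TX p hp hx₀C ?_
    intro a b _ hbs hadj haC
    by_contra hbC
    exact hbs ⟨hbC, a, haC, hadj.symm⟩
  have hCD : C = Aᶜ := by
    apply Set.Subset.antisymm hCsub
    intro x hx
    by_cases hxN : x ∈ N
    · exact absurd (hNA hxN) hx
    · exact hCinS x hxN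
  refine ⟨C, ⟨x₀, hx₀C⟩, fun x hx => hCsub hx, himgconn, ?_, ?_, ?_⟩
  · intro x hx
    rw [hCD] at hx
    exact not_not.1 (fun h => hx h)
  · intro x hx
    have hxA : x ∈ A := by
      rw [hCD] at hx
      exact not_not.1 (fun h => hx h)
    have hxN : x ∈ N := by
      by_contra hxN
      exact (hCsub (hCinS x hxN)) hxA
    exact hxN.2
  · rw [hCD, compl_compl]
    have hAN : A ⊆ N := by
      intro x hxA
      by_contra hxN
      exact (hCsub (hCinS x hxN)) hxA
    exact le_trans (Set.ncard_le_ncard hAN (Set.toFinite _)) hNcard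

end PUniv

namespace PUniv

lemma main_count {V : Type*} [Fintype V] (G : SimpleGraph V) (hG : IsPlanar G) {n : ℕ}
    {ι : Type} [DecidableEq ι] :
    ∀ (N : ℕ) (s : Set V), s.ncard ≤ N → ∀ (I : Finset ι) (T : ι → SimpleGraph (Fin n)),
      (∀ i ∈ I, IsTriangulation (T i)) → (∀ i ∈ I, FourConnected (T i)) →
      (∀ i ∈ I, ∀ j ∈ I, i ≠ j → ¬ Nonempty (T i ≃g T j)) →
      ∀ (f : ι → (Fin n ↪ V)),
      (∀ i ∈ I, ∀ a b, (T i).Adj a b → G.Adj (f i a) (f i b)) →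
      (∀ i ∈ I, ∀ x, f i x ∈ s) →
      I.Nonempty → I.card * (n - 3) + 3 ≤ s.ncard := by
  intro N
  induction N with
  | zero =>
    rintro s hs I T hT h4 hiso f hf hrange ⟨y, hy⟩
    exfalso
    have hn : 5 ≤ n := by simpa using (h4 y hy).1
    have hmem := hrange y hy ⟨0, by omega⟩
    have hne : s.Nonempty := ⟨_, hmem⟩
    rw [Nat.le_zero, Set.ncard_eq_zero (Set.toFinite s)] at hs
    rw [hs] at hne
    exact Set.not_nonempty_empty hne
  | succ N ih =>
    rintro s hs I T hT h4 hiso f hf hrange ⟨y, hy⟩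
    classical
    have hn : 5 ≤ n := by simpa using (h4 y hy).1
    by_cases h1 : I.card ≤ 1
    · -- a single copy: its n vertices lie in s
      have hIcard : I.card = 1 := le_antisymm h1 (Finset.card_pos.2 ⟨y, hy⟩)
      have hsub : Set.range (f y) ⊆ s := by rintro v ⟨x, rfl⟩; exact hrange y hy x
      have hrc : (Set.range (f y)).ncard = n := by
        rw [← Set.image_univ, Set.ncard_image_of_injective _ (f y).injective, Set.ncard_univ]
        simp [Nat.card_eq_fintype_card]
      have hle := Set.ncard_le_ncard hsub (Set.toFinite s)
      rw [hrc] at hle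
      rw [hIcard]
      omega
    · push_neg at h1
      obtain ⟨x₁, hx₁I, hx₁y⟩ := Finset.exists_mem_ne h1 y
      have hx₁e : x₁ ∈ I.erase y := Finset.mem_erase.2 ⟨hx₁y, hx₁I⟩
      -- structure of every copy other than y relative to the copy y
      have key : ∀ i, ∃ D : Set (Fin n), i ∈ I.erase y →
          (D.Nonempty ∧ (∀ x ∈ D, f i x ∉ Set.range (f y)) ∧
           (G.induce (f i '' D)).Connected ∧
           (∀ x, x ∉ D → f i x ∈ Set.range (f y)) ∧
           (∀ x, x ∉ D → ∃ z ∈ D, (T i).Adj x z)) := by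
        intro i
        by_cases hi : i ∈ I.erase y
        · have hiI := Finset.mem_of_mem_erase hi
          have hine : i ≠ y := Finset.ne_of_mem_erase hi
          obtain ⟨Di, p1, p2, p3, p4, p5, _⟩ :=
            copy_structure G hG (hT i hiI) (h4 i hiI) (hT y hy)
              (hiso i hiI y hy hine) (f i) (f y) (hf i hiI) (hf y hy)
          exact ⟨Di, fun _ => ⟨p1, p2, p3, p4, p5⟩⟩
        · exact ⟨∅, fun h => absurd h hi⟩
      choose D hD using key
      set UY := Set.range (f y) with hUY
      set t := s \ UY with htdef
      obtain ⟨d₁, hd₁⟩ := (hD x₁ hx₁e).1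
      set v₀ := f x₁ d₁ with hv₀
      have hv₀t : v₀ ∈ t := ⟨hrange x₁ hx₁I d₁, (hD x₁ hx₁e).2.1 d₁ hd₁⟩
      set c := walkSet G v₀ t with hcdef
      have hct : c ⊆ t := walkSet_subset G
      have hcconn := conn_walkSet G hv₀t
      set att := {x : Fin n | ∃ w ∈ c, G.Adj (f y x) w} with hatt
      have hattle : att.ncard ≤ 3 := attach_ncard_le G hG (hT y hy) (f y) (hf y hy) hcconn
        (fun x hx => (hct hx).2 (Set.mem_range_self x))
      set K := (f y) '' att with hK
      have hKcard : K.ncard ≤ 3 := le_trans (Set.ncard_image_le (Set.toFinite _)) hattle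
      set I₁ := (I.erase y).filter (fun i => ((f i '' D i) ∩ c).Nonempty) with hI₁
      set I₂ := I \ I₁ with hI₂
      have hI₁I : I₁ ⊆ I :=
        subset_trans (Finset.filter_subset _ _) (Finset.erase_subset _ _)
      have hI₂I : I₂ ⊆ I := Finset.sdiff_subset
      -- copies in I₁ live inside c ∪ K
      have hr1 : ∀ i ∈ I₁, ∀ x, f i x ∈ c ∪ K := by
        intro i hi x
        have hie : i ∈ I.erase y := (Finset.mem_filter.1 hi).1
        have hne : ((f i '' D i) ∩ c).Nonempty := (Finset.mem_filter.1 hi).2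
        obtain ⟨hDne, hDdisj, hDconn, hDcov, hDadj⟩ := hD i hie
        have hiI := Finset.mem_of_mem_erase hie
        have hDt : f i '' D i ⊆ t := by
          rintro _ ⟨z, hz, rfl⟩
          exact ⟨hrange i hiI z, hDdisj z hz⟩
        have hDc : f i '' D i ⊆ c := conn_subset_walkSet G hDconn hDt hne
        by_cases hx : x ∈ D i
        · exact Or.inl (hDc ⟨x, hx, rfl⟩)
        · refine Or.inr ?_
          obtain ⟨z, hzD, hadj⟩ := hDadj x hx
          obtain ⟨w, hw⟩ := hDcov x hx
          refine ⟨w, ⟨f i z, hDc ⟨z, hzD, rfl⟩, ?_⟩, hw⟩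
          rw [hw]
          exact hf i hiI x z hadj
      -- copies in I₂ avoid c
      have hr2 : ∀ i ∈ I₂, ∀ x, f i x ∈ s \ c := by
        intro i hi x
        have hiI := (Finset.mem_sdiff.1 hi).1
        have hni := (Finset.mem_sdiff.1 hi).2
        refine ⟨hrange i hiI x, ?_⟩
        by_cases hiy : i = y
        · subst hiy
          intro hxc
          exact (hct hxc).2 (Set.mem_range_self x)
        · have hie : i ∈ I.erase y := Finset.mem_erase.2 ⟨hiy, hiI⟩
          have hnfil : ¬ ((f i '' D i) ∩ c).Nonempty := fun h =>
            hni (Finset.mem_filter.2 ⟨hie, h⟩)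
          obtain ⟨hDne, hDdisj, hDconn, hDcov, hDadj⟩ := hD i hie
          by_cases hx : x ∈ D i
          · exact fun hxc => hnfil ⟨f i x, ⟨x, hx, rfl⟩, hxc⟩
          · intro hxc
            obtain ⟨w, hw⟩ := hDcov x hx
            exact (hct hxc).2 (hDcov x hx)
      have hx₁I₁ : x₁ ∈ I₁ :=
        Finset.mem_filter.2 ⟨hx₁e, ⟨v₀, ⟨d₁, hd₁, rfl⟩, mem_walkSet_self G hv₀t⟩⟩
      have hyI₂ : y ∈ I₂ := by
        refine Finset.mem_sdiff.2 ⟨hy, fun h => ?_⟩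
        exact (Finset.mem_erase.1 (Finset.mem_filter.1 h).1).1 rfl
      have hs1sub : c ∪ K ⊆ s := by
        rintro v (h | h)
        · exact (hct h).1
        · obtain ⟨w, _, rfl⟩ := h
          exact hrange y hy w
      -- strictness of both parts
      obtain ⟨z, hz⟩ : ∃ z : Fin n, z ∉ att := by
        by_contra h
        push_neg at h
        have h' : att = Set.univ := Set.eq_univ_of_forall h
        rw [h', Set.ncard_univ] at hattle
        simp only [Nat.card_eq_fintype_card, Fintype.card_fin] at hattle
        omega
      have hvznot : f y z ∉ c ∪ K := by
        rintro (h | h)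
        · exact (hct h).2 (Set.mem_range_self z)
        · obtain ⟨w, hwatt, hw⟩ := h
          exact hz ((f y).injective hw ▸ hwatt)
      have hs1lt : (c ∪ K).ncard < s.ncard :=
        Set.ncard_lt_ncard ((Set.ssubset_iff_of_subset hs1sub).2
          ⟨f y z, hrange y hy z, hvznot⟩) (Set.toFinite s)
      have hs2lt : (s \ c).ncard < s.ncard :=
        Set.ncard_lt_ncard ((Set.ssubset_iff_of_subset Set.diff_subset).2
          ⟨v₀, (hct (mem_walkSet_self G hv₀t)).1, fun h => h.2 (mem_walkSet_self G hv₀t)⟩)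
          (Set.toFinite s)
      -- recursive calls
      have hrec1 := ih (c ∪ K) (by omega) I₁ T
        (fun i hi => hT i (hI₁I hi)) (fun i hi => h4 i (hI₁I hi))
        (fun i hi j hj hij => hiso i (hI₁I hi) j (hI₁I hj) hij) f
        (fun i hi => hf i (hI₁I hi)) hr1 ⟨x₁, hx₁I₁⟩
      have hrec2 := ih (s \ c) (by omega) I₂ T
        (fun i hi => hT i (hI₂I hi)) (fun i hi => h4 i (hI₂I hi))
        (fun i hi j hj hij => hiso i (hI₂I hi) j (hI₂I hj) hij) f
        (fun i hi => hf i (hI₂I hi)) hr2 ⟨y, hyI₂⟩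
      -- combine
      have hunion : (c ∪ K) ∪ (s \ c) = s := by
        apply Set.Subset.antisymm
        · exact Set.union_subset hs1sub Set.diff_subset
        · intro v hv
          by_cases hvc : v ∈ c
          · exact Or.inl (Or.inl hvc)
          · exact Or.inr ⟨hv, hvc⟩
      have hint : ((c ∪ K) ∩ (s \ c)).ncard ≤ 3 := by
        refine le_trans (Set.ncard_le_ncard ?_ (Set.toFinite _)) hKcard
        rintro v ⟨h1', h2'⟩
        rcases h1' with h | h
        · exact absurd h h2'.2
        · exact h
      have hsum := Set.ncard_union_add_ncard_inter (c ∪ K) (s \ c)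
        (Set.toFinite _) (Set.toFinite _)
      rw [hunion] at hsum
      have hcards : I₁.card + I₂.card = I.card := by
        have h' := Finset.card_sdiff_of_subset hI₁I
        have h'' := Finset.card_le_card hI₁I
        rw [hI₂]
        omega
      rw [← hcards, Nat.add_mul]
      set a := I₁.card * (n - 3)
      set b := I₂.card * (n - 3)
      omega

end PUniv

/-- Any planar graph containing every `n`-vertex planar graph as a subgraph has at least
`(n − 3) · k_n` vertices, where `k_n` is the number of combinatorially distinct
(i.e. isomorphism classes of) 4-connected planar triangulations on `n` vertices. -/
theorem planar_universal_lower_bound (n : ℕ) {V : Type*} [Fintype V]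
    (G : SimpleGraph V) (hG : IsPlanar G)
    (huniv : ∀ H : SimpleGraph (Fin n), IsPlanar H → Contains G H) :
    (n - 3) * Nat.card (Quotient (triSetoid n)) ≤ Fintype.card V := by
  classical
  haveI : Finite (SimpleGraph (Fin n)) :=
    Finite.of_injective (fun H => H.Adj) (fun a b h => SimpleGraph.ext h)
  rcases Nat.eq_zero_or_pos (Nat.card (Quotient (triSetoid n))) with hk | hk
  · rw [hk]
    simp
  · haveI hne : Nonempty (Quotient (triSetoid n)) :=
      (Nat.card_pos_iff.1 hk).1
    haveI : Fintype (Quotient (triSetoid n)) := Fintype.ofFinite _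
    set T : Quotient (triSetoid n) → SimpleGraph (Fin n) := fun q => (q.out).1 with hT
    have hcontains : ∀ q : Quotient (triSetoid n), Contains G (T q) := fun q =>
      huniv (T q) ((q.out).2.1.1)
    choose f hf using hcontains
    have hmain := PUniv.main_count G hG ((Set.univ : Set V).ncard) Set.univ le_rfl
      (Finset.univ : Finset (Quotient (triSetoid n))) T
      (fun q _ => (q.out).2.1) (fun q _ => (q.out).2.2)
      (fun i _ j _ hij hiso => hij (Quotient.out_equiv_out.1 hiso)) f
      (fun q _ => hf q) (fun q _ x => Set.mem_univ _)
      Finset.univ_nonempty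
    rw [Finset.card_univ, Set.ncard_univ, Nat.card_eq_fintype_card] at hmain
    have hcard : Nat.card (Quotient (triSetoid n)) = Fintype.card (Quotient (triSetoid n)) :=
      Nat.card_eq_fintype_card
    rw [hcard, Nat.mul_comm]
    omega
end

section
/- There is no planar graph on 48 vertices containing C_{48,1}, C_{48,2}, and C_{48,8} simultaneously as subgraphs. -/
open SimpleGraph

/-! ### Auxiliary lemmas -/

lemma cat_adj_sl {k m : ℕ} (i : Fin k) (j : Fin m) :
    (caterpillar k m).Adj (Sum.inl i) (Sum.inr (i, j)) :=
  ⟨by simp, Or.inl rfl⟩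

lemma cat_adj_ss {k m : ℕ} (i j : Fin k) (h : (i : ℕ) + 1 = (j : ℕ)) :
    (caterpillar k m).Adj (Sum.inl i) (Sum.inl j) :=
  ⟨by intro he; injection he with he'; subst he'; omega, Or.inl h⟩

def F3 {V : Type*} (A B C : Set V) (x : Fin 3 → V) : Fin 3 ⊕ Fin 3 → Set V
  | .inl 0 => A
  | .inl 1 => B
  | .inl 2 => C
  | .inr t => {x t}

lemma induce_singleton_connected {V : Type*} (G : SimpleGraph V) (x : V) :
    (G.induce {x}).Connected := by
  have : Nonempty ({x} : Set V) := ⟨⟨x, rfl⟩⟩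
  constructor
  intro a b
  have : a = b := Subtype.ext (a.2.trans b.2.symm)
  exact this ▸ Reachable.refl a

lemma induce_chain_connected {V : Type*} (G : SimpleGraph V) (n : ℕ) (g : ℕ → V)
    (hadj : ∀ k < n, G.Adj (g k) (g (k + 1))) :
    (G.induce (g '' Set.Iic n)).Connected := by
  have mem : ∀ k, k ≤ n → g k ∈ g '' Set.Iic n := fun k hk => ⟨k, hk, rfl⟩
  have key : ∀ k (hk : k ≤ n),
      (G.induce (g '' Set.Iic n)).Reachable ⟨g 0, mem 0 n.zero_le⟩ ⟨g k, mem k hk⟩ := by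
    intro k
    induction k with
    | zero => intro _; exact Reachable.refl _
    | succ m ih =>
      intro hk
      exact (ih (Nat.le_of_succ_le hk)).trans (Adj.reachable (hadj m hk))
  constructor
  rintro ⟨a, xa, hxa, rfl⟩ ⟨b, xb, hxb, rfl⟩
  exact (key xa hxa).symm.trans (key xb hxb)

lemma key_minor {V : Type*} (G : SimpleGraph V) (c v : V) (σ : Fin 8 → V)
    (lef : Fin 8 × Fin 5 → V)
    (hspine : ∀ i j : Fin 8, (i : ℕ) + 1 = (j : ℕ) → G.Adj (σ i) (σ j))
    (hleafadj : ∀ p : Fin 8 × Fin 5, G.Adj (σ p.1) (lef p))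
    (hnel : ∀ (i : Fin 8) (p : Fin 8 × Fin 5), σ i ≠ lef p)
    (huniv : ∀ w, w ≠ c → G.Adj c w)
    (hvc : v ≠ c)
    (a b : Fin 8) (hab : a ≤ b)
    (hclean : ∀ i : Fin 8, a ≤ i → i ≤ b → σ i ≠ v ∧ σ i ≠ c)
    (x : Fin 3 → V) (hxinj : Function.Injective x)
    (idx : Fin 3 → Fin 8) (jdx : Fin 3 → Fin 5)
    (hx : ∀ t, x t = lef (idx t, jdx t))
    (hxint : ∀ t, a ≤ idx t ∧ idx t ≤ b)
    (hxc : ∀ t, x t ≠ c)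
    (hxv : ∀ t, G.Adj v (x t)) :
    HasMinor G (completeBipartiteGraph (Fin 3) (Fin 3)) := by
  have hab' : (a : ℕ) ≤ (b : ℕ) := hab
  set I : Set V := σ '' {i : Fin 8 | a ≤ i ∧ i ≤ b} with hI
  have hvI : v ∉ I := by rintro ⟨i, ⟨h1, h2⟩, rfl⟩; exact (hclean i h1 h2).1 rfl
  have hcI : c ∉ I := by rintro ⟨i, ⟨h1, h2⟩, rfl⟩; exact (hclean i h1 h2).2 rfl
  have hxI : ∀ t, x t ∉ I := by
    rintro t ⟨i, _, he⟩; exact hnel i (idx t, jdx t) (he.trans (hx t))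
  have hxv' : ∀ t, x t ≠ v := fun t he => G.irrefl (he ▸ (hxv t))
  have hIne : I.Nonempty := ⟨σ a, a, ⟨le_refl a, hab⟩, rfl⟩
  have hσI : ∀ t, σ (idx t) ∈ I := fun t => ⟨idx t, hxint t, rfl⟩
  have hb8 : (b : ℕ) < 8 := b.isLt
  have hIconn : (G.induce I).Connected := by
    have hIg : I = (fun k => σ ⟨(a : ℕ) + min k ((b : ℕ) - (a : ℕ)),
        by have := Nat.min_le_right k ((b:ℕ) - (a:ℕ)); omega⟩) '' Set.Iic ((b : ℕ) - (a : ℕ)) := by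
      ext w
      constructor
      · rintro ⟨i, ⟨h1, h2⟩, rfl⟩
        have h1' : (a : ℕ) ≤ (i : ℕ) := h1
        have h2' : (i : ℕ) ≤ (b : ℕ) := h2
        refine ⟨(i : ℕ) - (a : ℕ), by simp only [Set.mem_Iic]; omega, ?_⟩
        exact congrArg σ (Fin.ext (by simp only [Fin.val_mk]; omega))
      · rintro ⟨k, hk, rfl⟩
        simp only [Set.mem_Iic] at hk
        refine ⟨_, ⟨?_, ?_⟩, rfl⟩
        · rw [Fin.le_def]; simp only [Fin.val_mk]; omega
        · rw [Fin.le_def]; simp only [Fin.val_mk]; omega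
    rw [hIg]
    apply induce_chain_connected
    intro k hk
    apply hspine
    simp only [Fin.val_mk]
    omega
  refine ⟨F3 {v} {c} I x, ?_, ?_, ?_, ?_⟩
  · rintro (i | t)
    · fin_cases i <;> simp [F3, hIne]
    · simp [F3]
  · rintro (i | t)
    · fin_cases i
      · exact induce_singleton_connected G v
      · exact induce_singleton_connected G c
      · exact hIconn
    · exact induce_singleton_connected G (x t)
  · intro w1 w2 hne
    have hcv : c ≠ v := Ne.symm hvc
    have hxc' : ∀ t, c ≠ x t := fun t => Ne.symm (hxc t)
    have hxv'' : ∀ t, v ≠ x t := fun t => Ne.symm (hxv' t)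
    rcases w1 with i | t <;> rcases w2 with i' | t'
    · fin_cases i <;> fin_cases i' <;>
        simp_all [F3, Set.disjoint_singleton, Set.disjoint_singleton_left,
          Set.disjoint_singleton_right]
    · fin_cases i <;>
        simp_all [F3, Set.disjoint_singleton, Set.disjoint_singleton_left,
          Set.disjoint_singleton_right]
    · fin_cases i' <;>
        simp_all [F3, Set.disjoint_singleton, Set.disjoint_singleton_left,
          Set.disjoint_singleton_right]
    · have htt : t ≠ t' := by rintro rfl; exact hne rfl
      simp only [F3, Set.disjoint_singleton]
      exact fun he => htt (hxinj he)
  · rintro (i | t) (i' | t') hadj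
    · rcases hadj with ⟨h1, h2⟩ | ⟨h1, h2⟩ <;> simp at h1 h2
    · fin_cases i
      · exact ⟨v, by simp [F3], x t', by simp [F3], hxv t'⟩
      · exact ⟨c, by simp [F3], x t', by simp [F3], huniv (x t') (hxc t')⟩
      · exact ⟨σ (idx t'), by simpa [F3] using hσI t', x t', by simp [F3],
          by rw [hx t']; exact hleafadj (idx t', jdx t')⟩
    · fin_cases i'
      · exact ⟨x t, by simp [F3], v, by simp [F3], (hxv t).symm⟩
      · exact ⟨x t, by simp [F3], c, by simp [F3], (huniv (x t) (hxc t)).symm⟩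
      · exact ⟨x t, by simp [F3], σ (idx t), by simpa [F3] using hσI t,
          by rw [hx t]; exact (hleafadj (idx t, jdx t)).symm⟩
    · rcases hadj with ⟨h1, h2⟩ | ⟨h1, h2⟩ <;> simp at h1 h2

/-- There is no planar graph on `48` vertices containing the star `C_{48,1}`, the double star
`C_{48,2}` and the caterpillar `C_{48,8}` simultaneously as subgraphs. -/
theorem no_planar_graph_for_C48 {V : Type*} [Fintype V] (G : SimpleGraph V)
    (hcard : Fintype.card V = 48) (hplanar : IsPlanar G) :
    ¬ (Contains G (caterpillar 1 47) ∧
       Contains G (caterpillar 2 23) ∧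
       Contains G (caterpillar 8 5)) := by
  classical
  rintro ⟨⟨f1, hf1⟩, ⟨f2, hf2⟩, ⟨f8, hf8⟩⟩
  have hs1 : Function.Surjective f1 :=
    ((Fintype.bijective_iff_injective_and_card f1).mpr ⟨f1.injective, by simp [hcard]⟩).2
  have hs8 : Function.Surjective f8 :=
    ((Fintype.bijective_iff_injective_and_card f8).mpr ⟨f8.injective, by simp [hcard]⟩).2
  -- the universal vertex
  set c : V := f1 (Sum.inl 0) with hc
  have huniv : ∀ w, w ≠ c → G.Adj c w := by
    intro w hw
    obtain ⟨y, rfl⟩ := hs1 w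
    rcases y with i | ⟨i, j⟩
    · exact absurd (by rw [Subsingleton.elim i 0]) hw
    · have hi : i = 0 := Subsingleton.elim i 0
      subst hi
      exact hf1 (cat_adj_sl 0 j)
  -- a vertex `v ≠ c` with 24 distinct neighbors
  have hfun : ∀ x y : Fin 2, G.Adj (f2 (Sum.inl y)) (f2 (Sum.inl x)) →
      ∃ h : Fin 24 → V, Function.Injective h ∧ ∀ t, G.Adj (f2 (Sum.inl x)) (h t) := by
    intro x y hadj
    refine ⟨fun t => if ht : (t : ℕ) = 0 then f2 (Sum.inl y)
      else f2 (Sum.inr (x, ⟨(t : ℕ) - 1, by omega⟩)), ?_, ?_⟩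
    · intro s t hst
      simp only [] at hst
      by_cases hs0 : (s : ℕ) = 0 <;> by_cases ht0 : (t : ℕ) = 0
      · exact Fin.ext (by omega)
      · simp only [dif_pos hs0, dif_neg ht0] at hst
        exact absurd (f2.injective hst) (by simp)
      · simp only [dif_neg hs0, dif_pos ht0] at hst
        exact absurd (f2.injective hst) (by simp)
      · simp only [dif_neg hs0, dif_neg ht0] at hst
        have := f2.injective hst
        simp only [Sum.inr.injEq, Prod.mk.injEq, Fin.mk.injEq] at this
        exact Fin.ext (by omega)
    · intro t
      by_cases ht0 : (t : ℕ) = 0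
      · simp only [dif_pos ht0]
        exact hadj.symm
      · simp only [dif_neg ht0]
        exact hf2 (cat_adj_sl x _)
  have hu01 : G.Adj (f2 (Sum.inl 0)) (f2 (Sum.inl 1)) := hf2 (cat_adj_ss 0 1 (by decide))
  obtain ⟨v, hvc, h, hinj, hadjv⟩ :
      ∃ v, v ≠ c ∧ ∃ h : Fin 24 → V, Function.Injective h ∧ ∀ t, G.Adj v (h t) := by
    by_cases h0 : f2 (Sum.inl 0) = c
    · refine ⟨f2 (Sum.inl 1), ?_, ?_⟩
      · intro he
        have := f2.injective (he.trans h0.symm)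
        simp at this
      · obtain ⟨h, h1, h2⟩ := hfun 1 0 hu01
        exact ⟨h, h1, h2⟩
    · obtain ⟨h, h1, h2⟩ := hfun 0 1 hu01.symm
      exact ⟨f2 (Sum.inl 0), h0, h, h1, h2⟩
  -- the caterpillar structure
  set σ : Fin 8 → V := fun i => f8 (Sum.inl i) with hσ
  set lef : Fin 8 × Fin 5 → V := fun p => f8 (Sum.inr p) with hlef
  have hσinj : Function.Injective σ := fun i j hij => by
    have := f8.injective hij; simpa using this
  have hnel : ∀ (i : Fin 8) (p : Fin 8 × Fin 5), σ i ≠ lef p := by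
    intro i p he
    have := f8.injective he; simp at this
  have hspine : ∀ i j : Fin 8, (i : ℕ) + 1 = (j : ℕ) → G.Adj (σ i) (σ j) :=
    fun i j hij => hf8 (cat_adj_ss i j hij)
  have hleafadj : ∀ p : Fin 8 × Fin 5, G.Adj (σ p.1) (lef p) :=
    fun p => hf8 (cat_adj_sl p.1 p.2)
  -- blocked spine indices
  set J : Finset (Fin 8) := Finset.univ.filter (fun i => σ i = v ∨ σ i = c) with hJ
  have hJmem : ∀ i : Fin 8, i ∈ J ↔ (σ i = v ∨ σ i = c) := by
    intro i; simp [hJ]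
  have hJcard : J.card ≤ 2 := by
    calc J.card ≤ ({v, c} : Finset V).card := by
          apply Finset.card_le_card_of_injOn σ
          · intro i hi
            rw [Finset.mem_coe, hJmem] at hi
            simp only [Finset.mem_coe, Finset.mem_insert, Finset.mem_singleton]
            exact hi
          · exact fun a _ b _ hab => hσinj hab
      _ ≤ 2 := (Finset.card_insert_le _ _).trans (by simp)
  -- the bad set
  set badfin : Finset V :=
    ((Finset.univ.image σ).erase v) ∪
      (Finset.univ.filter (fun p : Fin 8 × Fin 5 => p.1 ∈ J)).image lef ∪
      (({c} : Finset V) \ Finset.univ.image σ) with hbadfin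
  have himgcard : (Finset.univ.image σ).card ≤ 8 := by
    refine (Finset.card_image_le).trans ?_
    simp
  have hleafcard : ((Finset.univ.filter (fun p : Fin 8 × Fin 5 => p.1 ∈ J)).image lef).card
      ≤ J.card * 5 := by
    refine (Finset.card_image_le).trans ?_
    calc (Finset.univ.filter (fun p : Fin 8 × Fin 5 => p.1 ∈ J)).card
        ≤ (J ×ˢ (Finset.univ : Finset (Fin 5))).card := by
          apply Finset.card_le_card
          intro p hp
          simp only [Finset.mem_filter] at hp
          simp [Finset.mem_product, hp.2]
      _ = J.card * 5 := by simp [Finset.card_product]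
  have hbadcard : badfin.card + 2 * J.card ≤ 21 := by
    have hu : badfin.card ≤ ((Finset.univ.image σ).erase v).card
        + (((Finset.univ.filter (fun p : Fin 8 × Fin 5 => p.1 ∈ J)).image lef).card
        + (({c} : Finset V) \ Finset.univ.image σ).card) := by
      rw [hbadfin]
      calc (((Finset.univ.image σ).erase v) ∪
          (Finset.univ.filter (fun p : Fin 8 × Fin 5 => p.1 ∈ J)).image lef ∪
          (({c} : Finset V) \ Finset.univ.image σ)).card
          ≤ (((Finset.univ.image σ).erase v) ∪
            (Finset.univ.filter (fun p : Fin 8 × Fin 5 => p.1 ∈ J)).image lef).card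
            + (({c} : Finset V) \ Finset.univ.image σ).card := Finset.card_union_le _ _
        _ ≤ ((Finset.univ.image σ).erase v).card
            + ((Finset.univ.filter (fun p : Fin 8 × Fin 5 => p.1 ∈ J)).image lef).card
            + (({c} : Finset V) \ Finset.univ.image σ).card :=
            Nat.add_le_add_right (Finset.card_union_le _ _) _
        _ = _ := by omega
    have herase_le : ((Finset.univ.image σ).erase v).card ≤ 8 :=
      (Finset.card_le_card (Finset.erase_subset _ _)).trans himgcard
    have hsdiff_le : ((({c} : Finset V) \ Finset.univ.image σ)).card ≤ 1 :=
      (Finset.card_le_card Finset.sdiff_subset).trans (by simp)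
    rcases Nat.lt_or_ge J.card 2 with hJ2 | hJ2
    · omega
    · -- J.card = 2 : both v and c are spine vertices
      have h2 : 1 < J.card := hJ2
      obtain ⟨i1, hi1, i2, hi2, hne12⟩ := Finset.one_lt_card.mp h2
      have hvcimg : v ∈ Finset.univ.image σ ∧ c ∈ Finset.univ.image σ := by
        rcases (hJmem i1).mp hi1 with e1 | e1 <;> rcases (hJmem i2).mp hi2 with e2 | e2
        · exact absurd (hσinj (e1.trans e2.symm)) hne12
        · exact ⟨Finset.mem_image.mpr ⟨i1, Finset.mem_univ _, e1⟩,
            Finset.mem_image.mpr ⟨i2, Finset.mem_univ _, e2⟩⟩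
        · exact ⟨Finset.mem_image.mpr ⟨i2, Finset.mem_univ _, e2⟩,
            Finset.mem_image.mpr ⟨i1, Finset.mem_univ _, e1⟩⟩
        · exact absurd (hσinj (e1.trans e2.symm)) hne12
      have herase7 : ((Finset.univ.image σ).erase v).card ≤ 7 := by
        rw [Finset.card_erase_of_mem hvcimg.1]
        omega
      have hsdiff0 : ((({c} : Finset V) \ Finset.univ.image σ)).card = 0 := by
        rw [Finset.card_eq_zero, Finset.sdiff_eq_empty_iff_subset]
        simpa using hvcimg.2
      omega
  -- 24 distinct neighbors of v
  set T : Finset V := Finset.univ.image h with hT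
  have hTcard : T.card = 24 := by
    rw [hT, Finset.card_image_of_injective _ hinj]
    simp
  set good : Finset V := T \ badfin with hgood
  have hTsplit : T.card ≤ good.card + badfin.card := by
    calc T.card = (T \ badfin ∪ T ∩ badfin).card := by rw [Finset.sdiff_union_inter]
      _ ≤ (T \ badfin).card + (T ∩ badfin).card := Finset.card_union_le _ _
      _ ≤ good.card + badfin.card := by
          rw [hgood]
          exact Nat.add_le_add_left (Finset.card_le_card Finset.inter_subset_right) _
  have hgoodcard : (J.card + 1) * 2 < good.card := by omega
  have hcbad : c ∈ badfin := by
    rw [hbadfin]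
    by_cases hcimg : c ∈ Finset.univ.image σ
    · exact Finset.mem_union_left _ (Finset.mem_union_left _
        (Finset.mem_erase.mpr ⟨fun he => hvc he.symm, hcimg⟩))
    · exact Finset.mem_union_right _ (Finset.mem_sdiff.mpr ⟨Finset.mem_singleton_self c, hcimg⟩)
  -- structure of good elements
  set gidx : V → Fin 8 := fun w => Sum.elim id Prod.fst (Function.invFun f8 w) with hgidx0
  have hgidx : ∀ p : Fin 8 × Fin 5, gidx (lef p) = p.1 := by
    intro p
    have hinv : Function.invFun f8 (f8 (Sum.inr p)) = Sum.inr p :=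
      Function.leftInverse_invFun f8.injective _
    rw [hgidx0, hlef]
    simp only []
    rw [hinv]
    rfl
  have hgoodstruct : ∀ w ∈ good, ∃ p : Fin 8 × Fin 5,
      w = lef p ∧ p.1 ∉ J ∧ w ≠ c ∧ G.Adj v w := by
    intro w hw
    rw [hgood, Finset.mem_sdiff] at hw
    obtain ⟨hwT, hwB⟩ := hw
    rw [hT, Finset.mem_image] at hwT
    obtain ⟨t, -, rfl⟩ := hwT
    have hadj := hadjv t
    have hwv : h t ≠ v := fun he => G.irrefl (he ▸ hadj)
    have hwc : h t ≠ c := fun he => hwB (he ▸ hcbad)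
    obtain ⟨y, hy⟩ := hs8 (h t)
    rcases y with i | p
    · exfalso
      apply hwB
      rw [hbadfin]
      refine Finset.mem_union_left _ (Finset.mem_union_left _
        (Finset.mem_erase.mpr ⟨Ne.symm (fun he => hwv he.symm), ?_⟩))
      exact Finset.mem_image.mpr ⟨i, Finset.mem_univ _, hy⟩
    · by_cases hpJ : p.1 ∈ J
      · exfalso
        apply hwB
        rw [hbadfin]
        refine Finset.mem_union_left _ (Finset.mem_union_right _ ?_)
        exact Finset.mem_image.mpr ⟨p, Finset.mem_filter.mpr ⟨Finset.mem_univ _, hpJ⟩, hy⟩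
      · exact ⟨p, hy.symm, hpJ, hwc, hadj⟩
  -- pigeonhole over the pieces of the spine
  set pid : Fin 8 → ℕ := fun i => (J.filter (fun j => j < i)).card with hpiddef
  have hpidle : ∀ i, pid i ≤ J.card := fun i => Finset.card_le_card (Finset.filter_subset _ _)
  have hmaps : ∀ w ∈ good, pid (gidx w) ∈ Finset.range (J.card + 1) :=
    fun w _ => Finset.mem_range.mpr (Nat.lt_succ_of_le (hpidle _))
  obtain ⟨y, -, hy3⟩ := Finset.exists_lt_card_fiber_of_mul_lt_card_of_maps_to hmaps
    (by rw [Finset.card_range]; exact hgoodcard)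
  obtain ⟨s3, hs3sub, hs3card⟩ := Finset.exists_subset_card_eq hy3
  obtain ⟨x1, x2, x3, h12, h13, h23, rfl⟩ := Finset.card_eq_three.mp hs3card
  have hm : ∀ w ∈ ({x1, x2, x3} : Finset V), w ∈ good ∧ pid (gidx w) = y := by
    intro w hw
    have := hs3sub hw
    rw [Finset.mem_filter] at this
    exact this
  have hm1 := hm x1 (by simp)
  have hm2 := hm x2 (by simp)
  have hm3 := hm x3 (by simp)
  obtain ⟨p1, hp1, hp1J, hp1c, hp1adj⟩ := hgoodstruct x1 hm1.1
  obtain ⟨p2, hp2, hp2J, hp2c, hp2adj⟩ := hgoodstruct x2 hm2.1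
  obtain ⟨p3, hp3, hp3J, hp3c, hp3adj⟩ := hgoodstruct x3 hm3.1
  have hpid1 : pid p1.1 = y := by rw [← hgidx p1, ← hp1]; exact hm1.2
  have hpid2 : pid p2.1 = y := by rw [← hgidx p2, ← hp2]; exact hm2.2
  have hpid3 : pid p3.1 = y := by rw [← hgidx p3, ← hp3]; exact hm3.2
  set a : Fin 8 := min p1.1 (min p2.1 p3.1) with ha
  set b : Fin 8 := max p1.1 (max p2.1 p3.1) with hb
  have ha1 : a ≤ p1.1 := min_le_left _ _
  have ha2 : a ≤ p2.1 := le_trans (min_le_right _ _) (min_le_left _ _)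
  have ha3 : a ≤ p3.1 := le_trans (min_le_right _ _) (min_le_right _ _)
  have hb1 : p1.1 ≤ b := le_max_left _ _
  have hb2 : p2.1 ≤ b := le_trans (le_max_left _ _) (le_max_right _ _)
  have hb3 : p3.1 ≤ b := le_trans (le_max_right _ _) (le_max_right _ _)
  have hab : a ≤ b := le_trans ha1 hb1
  have hamem : a = p1.1 ∨ a = p2.1 ∨ a = p3.1 := by
    rw [ha]
    rcases min_choice p1.1 (min p2.1 p3.1) with hh | hh
    · exact Or.inl hh
    · rcases min_choice p2.1 p3.1 with hh' | hh'
      · exact Or.inr (Or.inl (hh.trans hh'))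
      · exact Or.inr (Or.inr (hh.trans hh'))
  have hbmem : b = p1.1 ∨ b = p2.1 ∨ b = p3.1 := by
    rw [hb]
    rcases max_choice p1.1 (max p2.1 p3.1) with hh | hh
    · exact Or.inl hh
    · rcases max_choice p2.1 p3.1 with hh' | hh'
      · exact Or.inr (Or.inl (hh.trans hh'))
      · exact Or.inr (Or.inr (hh.trans hh'))
  have haJ : a ∉ J := by rcases hamem with hh | hh | hh <;> rw [hh] <;> assumption
  have hbJ : b ∉ J := by rcases hbmem with hh | hh | hh <;> rw [hh] <;> assumption
  have hpida : pid a = y := by rcases hamem with hh | hh | hh <;> rw [hh] <;> assumption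
  have hpidb : pid b = y := by rcases hbmem with hh | hh | hh <;> rw [hh] <;> assumption
  have hclean : ∀ i : Fin 8, a ≤ i → i ≤ b → σ i ≠ v ∧ σ i ≠ c := by
    intro i hia hib
    by_contra hcon
    have hiJ : i ∈ J := by
      rw [hJmem]
      rcases not_and_or.mp hcon with hh | hh
      · exact Or.inl (not_not.mp hh)
      · exact Or.inr (not_not.mp hh)
    have hinea : i ≠ a := fun he => haJ (he ▸ hiJ)
    have hineb : i ≠ b := fun he => hbJ (he ▸ hiJ)
    have hlta : a < i := lt_of_le_of_ne hia (Ne.symm hinea)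
    have hltb : i < b := lt_of_le_of_ne hib hineb
    have hsub : J.filter (fun j => j < a) ⊆ J.filter (fun j => j < b) := by
      intro j hj
      rw [Finset.mem_filter] at hj ⊢
      exact ⟨hj.1, lt_trans hj.2 (lt_trans hlta hltb)⟩
    have hlt : pid a < pid b := by
      rw [hpiddef]
      apply Finset.card_lt_card
      rw [Finset.ssubset_iff_of_subset hsub]
      refine ⟨i, ?_, ?_⟩
      · rw [Finset.mem_filter]; exact ⟨hiJ, hltb⟩
      · rw [Finset.mem_filter]; exact fun hmc => absurd hmc.2 (not_lt.mpr (le_of_lt hlta))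
    rw [hpida, hpidb] at hlt
    exact lt_irrefl y hlt
  -- assemble the K_{3,3} minor
  have c3 : ∀ (P : Fin 3 → Prop), P 0 → P 1 → P 2 → ∀ t, P t := fun P h0 h1 h2 t => by
    match t with
    | 0 => exact h0
    | 1 => exact h1
    | 2 => exact h2
  apply hplanar.2
  refine key_minor G c v σ lef hspine hleafadj hnel huniv hvc a b hab hclean
    ![x1, x2, x3] ?_ ![p1.1, p2.1, p3.1] ![p1.2, p2.2, p3.2] ?_ ?_ ?_ ?_
  · intro s t
    refine c3 (fun s => ∀ t : Fin 3, ![x1, x2, x3] s = ![x1, x2, x3] t → s = t)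
      ?_ ?_ ?_ s t
    · refine c3 _ ?_ ?_ ?_
      · intro _; rfl
      · exact fun hh => absurd (show x1 = x2 from hh) h12
      · exact fun hh => absurd (show x1 = x3 from hh) h13
    · refine c3 _ ?_ ?_ ?_
      · exact fun hh => absurd (show x2 = x1 from hh).symm h12
      · intro _; rfl
      · exact fun hh => absurd (show x2 = x3 from hh) h23
    · refine c3 _ ?_ ?_ ?_
      · exact fun hh => absurd (show x3 = x1 from hh).symm h13
      · exact fun hh => absurd (show x3 = x2 from hh).symm h23
      · intro _; rfl
  · refine c3 _ ?_ ?_ ?_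
    · exact hp1
    · exact hp2
    · exact hp3
  · refine c3 _ ?_ ?_ ?_
    · exact ⟨ha1, hb1⟩
    · exact ⟨ha2, hb2⟩
    · exact ⟨ha3, hb3⟩
  · refine c3 _ ?_ ?_ ?_
    · exact hp1c
    · exact hp2c
    · exact hp3c
  · refine c3 _ ?_ ?_ ?_
    · exact hp1adj
    · exact hp2adj
    · exact hp3adj
end
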